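/- arXiv:2605.14574 — 8 statements merged into one kernel-verified Lean document; each statement's English description precedes it below -/
import Mathlib

section
/- Let H ≥ 1 be an integer and let u, v ∈ ℤ² be primitive vectors with height(u) ≤ H, height(v) ≤ H, and det(u, v) := u₁·v₂ − u₂·v₁ > 0. Suppose that no primitive vector w ∈ ℤ² with height(w) ≤ H can be written as w = s·u + t·v with real numbers s > 0 and t > 0. Then det(u, v) = 1, the vector u + v is primitive, u + v lies in the open cone {s·u + t·v : s > 0, t > 0}, and height(u + v) > H. -/
/-- A vector `(p, q) ∈ ℤ²` is primitive if `gcd(p, q) = 1`. -/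
def IsPrimitiveVec (w : ℤ × ℤ) : Prop := Int.gcd w.1 w.2 = 1

/-- The height of `(p, q) ∈ ℤ²` is `max(|p|, |q|)`. -/
def heightVec (w : ℤ × ℤ) : ℤ := max |w.1| |w.2|

/-- Farey gap lemma: if `u, v` are primitive of height at most `H`, with
`det(u, v) > 0`, and no primitive vector of height at most `H` lies in the open cone
`{s·u + t·v : s > 0, t > 0}`, then `det(u, v) = 1`, `u + v` is primitive, `u + v` lies
in the open cone, and `height(u + v) > H`. -/
theorem farey_gap_lemma (H : ℕ) (hH : 1 ≤ H) (u v : ℤ × ℤ)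
    (hu : IsPrimitiveVec u) (hv : IsPrimitiveVec v)
    (hhu : heightVec u ≤ (H : ℤ)) (hhv : heightVec v ≤ (H : ℤ))
    (hdet : 0 < u.1 * v.2 - u.2 * v.1)
    (hgap : ¬ ∃ w : ℤ × ℤ, IsPrimitiveVec w ∧ heightVec w ≤ (H : ℤ) ∧
      ∃ s t : ℝ, 0 < s ∧ 0 < t ∧
        (w.1 : ℝ) = s * u.1 + t * v.1 ∧ (w.2 : ℝ) = s * u.2 + t * v.2) :
    u.1 * v.2 - u.2 * v.1 = 1 ∧
    IsPrimitiveVec (u + v) ∧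
    (∃ s t : ℝ, 0 < s ∧ 0 < t ∧
      ((u + v).1 : ℝ) = s * u.1 + t * v.1 ∧ ((u + v).2 : ℝ) = s * u.2 + t * v.2) ∧
    (H : ℤ) < heightVec (u + v) := by
  have hu1 : |u.1| ≤ (H : ℤ) := le_trans (le_max_left _ _) hhu
  have hu2 : |u.2| ≤ (H : ℤ) := le_trans (le_max_right _ _) hhu
  have hv1 : |v.1| ≤ (H : ℤ) := le_trans (le_max_left _ _) hhv
  have hv2 : |v.2| ≤ (H : ℤ) := le_trans (le_max_right _ _) hhv
  have hHz : (1 : ℤ) ≤ (H : ℤ) := by exact_mod_cast hH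
  set d : ℤ := u.1 * v.2 - u.2 * v.1 with hd_def
  -- Step 1: d = 1
  have hdet1 : d = 1 := by
    by_contra hne
    have hd2 : 2 ≤ d := by omega
    -- Bezout coefficients for u
    obtain ⟨a, b, hab⟩ : ∃ a b : ℤ, u.1 * a + u.2 * b = 1 := by
      refine ⟨Int.gcdA u.1 u.2, Int.gcdB u.1 u.2, ?_⟩
      have h := Int.gcd_eq_gcd_ab u.1 u.2
      rw [hu] at h
      exact_mod_cast h.symm
    set m : ℤ := v.1 * a + v.2 * b with hm_def
    have hV1 : v.1 = m * u.1 + d * (-b) := by linear_combination (-v.1) * hab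
    have hV2 : v.2 = m * u.2 + d * a := by linear_combination (-v.2) * hab
    have hndvd : ¬ d ∣ m := by
      rintro ⟨c, hc⟩
      have hdv1 : d ∣ v.1 := ⟨c * u.1 + (-b), by rw [hV1, hc]; ring⟩
      have hdv2 : d ∣ v.2 := ⟨c * u.2 + a, by rw [hV2, hc]; ring⟩
      have : d ∣ (Int.gcd v.1 v.2 : ℤ) := Int.dvd_coe_gcd hdv1 hdv2
      rw [hv] at this
      have := Int.le_of_dvd (by norm_num) this
      omega
    have hd0 : (0 : ℤ) < d := hdet
    set r : ℤ := m % d with hr_def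
    have hr0 : 0 ≤ r := Int.emod_nonneg m (by omega)
    have hrd : r < d := Int.emod_lt_of_pos m hd0
    have hrne : r ≠ 0 := fun h => hndvd (Int.dvd_of_emod_eq_zero h)
    set k : ℤ := m / d + 1 with hk_def
    set e : ℤ := d - r with he_def
    have hkd : k * d = m + e := by
      have hm := Int.mul_ediv_add_emod m d
      rw [hk_def, he_def, hr_def]
      linear_combination hm
    have he1 : 1 ≤ e := by omega
    have hed : e + 1 ≤ d := by omega
    have hdw1 : d * (k * u.1 - b) = e * u.1 + v.1 := by
      linear_combination u.1 * hkd - hV1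
    have hdw2 : d * (k * u.2 + a) = e * u.2 + v.2 := by
      linear_combination u.2 * hkd - hV2
    have key : ∀ wj uj vj : ℤ, d * wj = e * uj + vj → |uj| ≤ (H : ℤ) → |vj| ≤ (H : ℤ) →
        |wj| ≤ (H : ℤ) := by
      intro wj uj vj hw hu' hv'
      have h1 : d * |wj| ≤ d * (H : ℤ) := by
        calc d * |wj| = |d * wj| := by rw [abs_mul, abs_of_pos hd0]
          _ = |e * uj + vj| := by rw [hw]
          _ ≤ |e * uj| + |vj| := abs_add_le _ _
          _ = e * |uj| + |vj| := by rw [abs_mul, abs_of_pos (by omega : (0:ℤ) < e)]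
          _ ≤ e * (H : ℤ) + (H : ℤ) := by
              have := mul_le_mul_of_nonneg_left hu' (by omega : (0:ℤ) ≤ e)
              linarith
          _ ≤ d * (H : ℤ) := by nlinarith
      exact le_of_mul_le_mul_left h1 hd0
    have hdR : (d : ℝ) ≠ 0 := by exact_mod_cast hd0.ne'
    refine hgap ⟨(k * u.1 - b, k * u.2 + a), ?_, ?_, (e : ℝ) / d, 1 / d, ?_, ?_, ?_, ?_⟩
    · rw [IsPrimitiveVec, ← Int.isCoprime_iff_gcd_eq_one]
      exact ⟨-u.2, u.1, by linear_combination hab⟩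
    · exact max_le (key _ _ _ hdw1 hu1 hv1) (key _ _ _ hdw2 hu2 hv2)
    · exact div_pos (by exact_mod_cast he1) (by exact_mod_cast hd0)
    · exact div_pos one_pos (by exact_mod_cast hd0)
    · have hR : (d : ℝ) * ((k : ℝ) * u.1 - b) = (e : ℝ) * u.1 + v.1 := by
        exact_mod_cast hdw1
      push_cast
      field_simp
      linear_combination hR
    · have hR : (d : ℝ) * ((k : ℝ) * u.2 + a) = (e : ℝ) * u.2 + v.2 := by
        exact_mod_cast hdw2
      push_cast
      field_simp
      linear_combination hR
  refine ⟨hdet1, ?_, ?_, ?_⟩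
  · rw [IsPrimitiveVec, ← Int.isCoprime_iff_gcd_eq_one]
    exact ⟨-u.2, u.1, by simp only [Prod.fst_add, Prod.snd_add]; linear_combination hdet1⟩
  · exact ⟨1, 1, one_pos, one_pos, by rw [Prod.fst_add]; push_cast; ring, by rw [Prod.snd_add]; push_cast; ring⟩
  · by_contra hle
    push_neg at hle
    refine hgap ⟨u + v, ?_, hle, 1, 1, one_pos, one_pos, by rw [Prod.fst_add]; push_cast; ring, by rw [Prod.snd_add]; push_cast; ring⟩
    rw [IsPrimitiveVec, ← Int.isCoprime_iff_gcd_eq_one]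
    exact ⟨-u.2, u.1, by simp only [Prod.fst_add, Prod.snd_add]; linear_combination hdet1⟩
end

section
/- Let N : ℝ² → ℝ be a norm, i.e. N(x + y) ≤ N(x) + N(y) for all x, y, N(c·x) = |c|·N(x) for all c ∈ ℝ and x, and N(x) = 0 implies x = 0. Then there exist constants c > 0 and K > 0, depending only on N, with the following property: whenever a, b ∈ ℝ² are nonzero, and g, h ∈ ℝ² satisfy ⟨y, g⟩ ≤ N(y) for all y ∈ ℝ² with ⟨a, g⟩ = N(a), and ⟨y, h⟩ ≤ N(y) for all y ∈ ℝ² with ⟨b, h⟩ = N(b), then the angle θ ∈ [0, π] between g and h (with respect to the standard Euclidean inner product) satisfies c·|g₁·h₂ − g₂·h₁| ≤ θ ≤ K·‖g − h‖, where ‖·‖ is the standard Euclidean norm. -/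
open scoped RealInnerProductSpace

/-- Comparison between supporting functionals and angular distance for a norm `N` on
`ℝ²`: if `g` and `h` are supporting functionals (subgradients) of `N` at nonzero
points `a` and `b`, then the angle `θ` between `g` and `h` satisfies
`c·|det(g, h)| ≤ θ ≤ K·‖g − h‖`, with constants depending only on `N`. -/
theorem functional_distance_and_angular_distance
    (N : EuclideanSpace ℝ (Fin 2) → ℝ)
    (h_add : ∀ x y, N (x + y) ≤ N x + N y)
    (h_smul : ∀ (c : ℝ) (x), N (c • x) = |c| * N x)
    (h_zero : ∀ x, N x = 0 → x = 0) :
    ∃ c : ℝ, 0 < c ∧ ∃ K : ℝ, 0 < K ∧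
      ∀ a b g h : EuclideanSpace ℝ (Fin 2), a ≠ 0 → b ≠ 0 →
        (∀ y, ⟪y, g⟫ ≤ N y) → ⟪a, g⟫ = N a →
        (∀ y, ⟪y, h⟫ ≤ N y) → ⟪b, h⟫ = N b →
        c * |g 0 * h 1 - g 1 * h 0| ≤ InnerProductGeometry.angle g h ∧
        InnerProductGeometry.angle g h ≤ K * ‖g - h‖ := by
  classical
  have hN0 : N 0 = 0 := by
    have := h_smul 0 0
    simpa using this
  have hNneg : ∀ x, 0 ≤ N x := by
    intro x
    have h1 : N (x + (-1 : ℝ) • x) ≤ N x + N ((-1 : ℝ) • x) := h_add _ _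
    have h2 : N ((-1 : ℝ) • x) = N x := by rw [h_smul]; simp
    have h3 : x + (-1 : ℝ) • x = 0 := by module
    rw [h3, hN0, h2] at h1
    linarith
  have hNpos : ∀ x, x ≠ 0 → 0 < N x := fun x hx =>
    (hNneg x).lt_of_ne fun h => hx (h_zero x h.symm)
  -- coordinate bound
  have habs : ∀ (y : EuclideanSpace ℝ (Fin 2)) (i : Fin 2), |y i| ≤ ‖y‖ := by
    intro y i
    rw [EuclideanSpace.norm_eq]
    calc |y i| = Real.sqrt (‖y i‖ ^ 2) := by
          rw [Real.sqrt_sq_eq_abs, Real.norm_eq_abs, abs_abs]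
      _ ≤ _ := Real.sqrt_le_sqrt
          (Finset.single_le_sum (f := fun j => ‖y j‖ ^ 2)
            (fun j _ => by positivity) (Finset.mem_univ i))
  set e0 : EuclideanSpace ℝ (Fin 2) := EuclideanSpace.single 0 1 with he0def
  set e1 : EuclideanSpace ℝ (Fin 2) := EuclideanSpace.single 1 1 with he1def
  have he0 : ‖e0‖ = 1 := by simp [he0def]
  have he0ne : e0 ≠ 0 := by
    intro hc
    rw [hc] at he0; simp at he0
  have he1ne : e1 ≠ 0 := by
    intro hc
    have : ‖e1‖ = 1 := by simp [he1def]
    rw [hc] at this; simp at this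
  set C : ℝ := N e0 + N e1 with hCdef
  have hCpos : 0 < C := add_pos (hNpos _ he0ne) (hNpos _ he1ne)
  have hupper : ∀ y, N y ≤ C * ‖y‖ := by
    intro y
    have hy : y = y 0 • e0 + y 1 • e1 := by
      ext i
      fin_cases i <;>
        simp [he0def, he1def, EuclideanSpace.single_apply]
    calc N y = N (y 0 • e0 + y 1 • e1) := by rw [← hy]
      _ ≤ N (y 0 • e0) + N (y 1 • e1) := h_add _ _
      _ = |y 0| * N e0 + |y 1| * N e1 := by rw [h_smul, h_smul]
      _ ≤ ‖y‖ * N e0 + ‖y‖ * N e1 :=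
          add_le_add (mul_le_mul_of_nonneg_right (habs y 0) (hNneg _))
            (mul_le_mul_of_nonneg_right (habs y 1) (hNneg _))
      _ = C * ‖y‖ := by rw [hCdef]; ring
  have hsub : ∀ x y, N x - N y ≤ N (x - y) := by
    intro x y
    have := h_add (x - y) y
    rw [sub_add_cancel] at this
    linarith
  have hsym : ∀ x y : EuclideanSpace ℝ (Fin 2), N (x - y) = N (y - x) := by
    intro x y
    have hxy : x - y = (-1 : ℝ) • (y - x) := by module
    rw [hxy, h_smul]; simp
  have hcont : Continuous N := by
    apply (LipschitzWith.of_dist_le_mul (K := C.toNNReal) ?_).continuous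
    intro x y
    rw [Real.dist_eq, dist_eq_norm, Real.coe_toNNReal _ hCpos.le]
    have h1 : N x - N y ≤ N (x - y) := hsub x y
    have h2 : N y - N x ≤ N (x - y) := by rw [hsym]; exact hsub y x
    have h3 := hupper (x - y)
    rw [abs_sub_le_iff]
    constructor <;> linarith
  obtain ⟨x₀, hx₀s, hx₀min'⟩ :=
    (isCompact_sphere (0 : EuclideanSpace ℝ (Fin 2)) 1).exists_isMinOn
      ⟨e0, by simpa using he0⟩ hcont.continuousOn
  have hx₀min : ∀ y ∈ Metric.sphere (0 : EuclideanSpace ℝ (Fin 2)) 1, N x₀ ≤ N y :=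
    fun y hy => hx₀min' hy
  have hx₀norm : ‖x₀‖ = 1 := by simpa using hx₀s
  have hx₀ne : x₀ ≠ 0 := by
    intro hc; rw [hc] at hx₀norm; simp at hx₀norm
  set m : ℝ := N x₀ with hmdef
  have hm : 0 < m := hNpos _ hx₀ne
  have hlower : ∀ y, m * ‖y‖ ≤ N y := by
    intro y
    rcases eq_or_ne y 0 with rfl | hy
    · simp [hN0, hNneg]
    · have hny : 0 < ‖y‖ := norm_pos_iff.2 hy
      have hu : (‖y‖⁻¹ • y) ∈ Metric.sphere (0 : EuclideanSpace ℝ (Fin 2)) 1 := by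
        simp [norm_smul, abs_of_pos (inv_pos.2 hny), inv_mul_cancel₀ hny.ne']
      have h1 := hx₀min _ hu
      have h2 : N (‖y‖⁻¹ • y) = ‖y‖⁻¹ * N y := by
        rw [h_smul, abs_of_pos (inv_pos.2 hny)]
      rw [h2] at h1
      have := mul_le_mul_of_nonneg_right h1 hny.le
      rw [inv_mul_eq_div, div_mul_cancel₀ _ hny.ne'] at this
      linarith
  have key : ∀ (a g : EuclideanSpace ℝ (Fin 2)), a ≠ 0 →
      (∀ y, ⟪y, g⟫ ≤ N y) → ⟪a, g⟫ = N a → m ≤ ‖g‖ ∧ ‖g‖ ≤ C := by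
    intro a g ha hg hag
    have hna : 0 < ‖a‖ := norm_pos_iff.2 ha
    constructor
    · have h1 : m * ‖a‖ ≤ ⟪a, g⟫ := hag ▸ hlower a
      have h2 : ⟪a, g⟫ ≤ ‖a‖ * ‖g‖ := real_inner_le_norm a g
      nlinarith
    · have h1 : ⟪g, g⟫ ≤ N g := hg g
      have h2 : N g ≤ C * ‖g‖ := hupper g
      have h3 : ⟪g, g⟫ = ‖g‖ * ‖g‖ := real_inner_self_eq_norm_mul_norm g
      nlinarith [norm_nonneg g]
  have hπ := Real.pi_pos
  refine ⟨(C * C)⁻¹, by positivity, Real.pi / m, by positivity, ?_⟩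
  intro a b g h ha hb hg hag hh hbh
  obtain ⟨hmg, hgC⟩ := key a g ha hg hag
  obtain ⟨hmh, hhC⟩ := key b h hb hh hbh
  have hgpos : 0 < ‖g‖ := lt_of_lt_of_le hm hmg
  have hhpos : 0 < ‖h‖ := lt_of_lt_of_le hm hmh
  have hgne : g ≠ 0 := norm_pos_iff.1 hgpos
  have hhne : h ≠ 0 := norm_pos_iff.1 hhpos
  set θ := InnerProductGeometry.angle g h with hθdef
  have hθ0 : 0 ≤ θ := InnerProductGeometry.angle_nonneg g h
  have hθπ : θ ≤ Real.pi := InnerProductGeometry.angle_le_pi g h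
  constructor
  · -- lower bound
    have hdet : Real.sin θ * (‖g‖ * ‖h‖) = |g 0 * h 1 - g 1 * h 0| := by
      rw [hθdef, InnerProductGeometry.sin_angle_mul_norm_mul_norm]
      have hid : ⟪g, g⟫ * ⟪h, h⟫ - ⟪g, h⟫ * ⟪g, h⟫
          = (g 0 * h 1 - g 1 * h 0) ^ 2 := by
        simp only [PiLp.inner_apply, RCLike.inner_apply, conj_trivial, Fin.sum_univ_two]
        ring
      rw [hid, Real.sqrt_sq_eq_abs]
    have hsin : Real.sin θ ≤ θ := Real.sin_le hθ0
    have hs0 : 0 ≤ Real.sin θ := Real.sin_nonneg_of_nonneg_of_le_pi hθ0 hθπ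
    have h1 : |g 0 * h 1 - g 1 * h 0| ≤ θ * (C * C) := by
      rw [← hdet]
      exact mul_le_mul hsin
        (mul_le_mul hgC hhC (norm_nonneg h) hCpos.le)
        (by positivity) hθ0
    calc (C * C)⁻¹ * |g 0 * h 1 - g 1 * h 0|
        ≤ (C * C)⁻¹ * (θ * (C * C)) :=
          mul_le_mul_of_nonneg_left h1 (by positivity)
      _ = θ := by field_simp
  · -- upper bound
    set u := ‖g‖⁻¹ • g with hudef
    set v := ‖h‖⁻¹ • h with hvdef
    have hu1 : ‖u‖ = 1 := norm_smul_inv_norm hgne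
    have hv1 : ‖v‖ = 1 := norm_smul_inv_norm hhne
    have hangle : InnerProductGeometry.angle u v = θ := by
      rw [hudef, hvdef,
        InnerProductGeometry.angle_smul_left_of_pos _ _ (inv_pos.2 hgpos),
        InnerProductGeometry.angle_smul_right_of_pos _ _ (inv_pos.2 hhpos)]
    have hcos : Real.cos θ = ⟪u, v⟫ := by
      rw [← hangle, InnerProductGeometry.cos_angle, hu1, hv1]
      simp
    have huv : ‖u - v‖ ^ 2 = 2 - 2 * Real.cos θ := by
      rw [norm_sub_sq_real, hu1, hv1, hcos]; ring
    have hshalf : Real.sin (θ / 2) = Real.sqrt ((1 - Real.cos θ) / 2) :=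
      Real.sin_half_eq_sqrt hθ0 (by linarith)
    have hcos1 : Real.cos θ ≤ 1 := Real.cos_le_one θ
    have hhalf : ‖u - v‖ = 2 * Real.sin (θ / 2) := by
      have h2 : (2 * Real.sin (θ / 2)) ^ 2 = 2 - 2 * Real.cos θ := by
        rw [hshalf, mul_pow, Real.sq_sqrt (by linarith)]
        ring
      have hsnn : 0 ≤ 2 * Real.sin (θ / 2) := by
        rw [hshalf]; positivity
      rw [← Real.sqrt_sq (norm_nonneg (u - v)), huv, ← h2, Real.sqrt_sq hsnn]
    have hml := Real.mul_le_sin (x := θ / 2) (by linarith) (by linarith)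
    have hθle : θ ≤ Real.pi * Real.sin (θ / 2) := by
      have := mul_le_mul_of_nonneg_left hml hπ.le
      calc θ = Real.pi * (2 / Real.pi * (θ / 2)) := by field_simp
        _ ≤ Real.pi * Real.sin (θ / 2) := this
    have hdiff : ‖u - v‖ ≤ 2 / m * ‖g - h‖ := by
      have hid : u - v = ‖g‖⁻¹ • (g - h) + (‖g‖⁻¹ - ‖h‖⁻¹) • h := by
        rw [hudef, hvdef]
        rw [smul_sub, sub_smul]
        abel
      have hnn : |‖g‖ - ‖h‖| ≤ ‖g - h‖ := abs_norm_sub_norm_le g h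
      calc ‖u - v‖ ≤ ‖‖g‖⁻¹ • (g - h)‖ + ‖(‖g‖⁻¹ - ‖h‖⁻¹) • h‖ := by
            rw [hid]; exact norm_add_le _ _
        _ = ‖g‖⁻¹ * ‖g - h‖ + |‖g‖⁻¹ - ‖h‖⁻¹| * ‖h‖ := by
            rw [norm_smul, norm_smul, Real.norm_eq_abs, Real.norm_eq_abs,
              abs_of_pos (inv_pos.2 hgpos)]
        _ ≤ 1 / m * ‖g - h‖ + 1 / m * ‖g - h‖ := by
            have hA : ‖g‖⁻¹ * ‖g - h‖ ≤ 1 / m * ‖g - h‖ := by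
              apply mul_le_mul_of_nonneg_right _ (norm_nonneg _)
              rw [one_div]
              exact inv_anti₀ hm hmg
            have hB : |‖g‖⁻¹ - ‖h‖⁻¹| * ‖h‖ ≤ 1 / m * ‖g - h‖ := by
              have hq : ‖g‖⁻¹ - ‖h‖⁻¹ = (‖h‖ - ‖g‖) / (‖g‖ * ‖h‖) := by
                field_simp
              rw [hq, abs_div, abs_of_pos (mul_pos hgpos hhpos)]
              rw [div_mul_eq_mul_div]
              rw [div_le_iff₀ (mul_pos hgpos hhpos)]
              have h1 : |‖h‖ - ‖g‖| ≤ ‖g - h‖ := by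
                rw [abs_sub_comm]; exact hnn
              calc |‖h‖ - ‖g‖| * ‖h‖ ≤ ‖g - h‖ * ‖h‖ :=
                    mul_le_mul_of_nonneg_right h1 (norm_nonneg _)
                _ ≤ 1 / m * ‖g - h‖ * (‖g‖ * ‖h‖) := by
                    rw [one_div]
                    rw [show m⁻¹ * ‖g - h‖ * (‖g‖ * ‖h‖)
                        = ‖g - h‖ * ‖h‖ * (m⁻¹ * ‖g‖) by ring]
                    nth_rewrite 1 [show ‖g - h‖ * ‖h‖ = ‖g - h‖ * ‖h‖ * 1 by ring]
                    apply mul_le_mul_of_nonneg_left _ (by positivity)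
                    rw [le_inv_mul_iff₀ hm, mul_one]
                    exact hmg
            exact add_le_add hA hB
        _ = 2 / m * ‖g - h‖ := by ring
    calc θ ≤ Real.pi * Real.sin (θ / 2) := hθle
      _ = Real.pi / 2 * ‖u - v‖ := by rw [hhalf]; ring
      _ ≤ Real.pi / 2 * (2 / m * ‖g - h‖) :=
          mul_le_mul_of_nonneg_left hdiff (by positivity)
      _ = Real.pi / m * ‖g - h‖ := by field_simp
end

section
/- For every η > 0 there exists a constant C > 0 such that the following holds. Let a, b ∈ ℝ with a ≥ η and b ≥ η, set x = 2·cosh(a) and y = 2·cosh(b), and let z, z' ∈ ℝ satisfy z ≥ z', z + z' = x·y, and z·z' = x² + y². Define A = (z − y·e^{−a})/(e^{a} − e^{−a}). Then A > 0 and |2·log A − 2·b| ≤ C·e^{−2a−2b}. -/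
set_option maxHeartbeats 1000000 in
/-- Analytic core of the endpoint support estimate: for `a, b ≥ η`, `x = 2cosh a`,
`y = 2cosh b`, and `z ≥ z'` the two roots with `z + z' = xy`, `z·z' = x² + y²`, the
quantity `A = (z − y·e^{−a})/(e^a − e^{−a})` is positive and satisfies
`|2 log A − 2b| ≤ C·e^{−2a−2b}` for a constant `C` depending only on `η`. -/
theorem endpoint_support_estimate :
    ∀ η : ℝ, 0 < η → ∃ C : ℝ, 0 < C ∧
      ∀ a b z z' : ℝ, η ≤ a → η ≤ b →
        z' ≤ z →
        z + z' = (2 * Real.cosh a) * (2 * Real.cosh b) →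
        z * z' = (2 * Real.cosh a) ^ 2 + (2 * Real.cosh b) ^ 2 →
        0 < (z - 2 * Real.cosh b * Real.exp (-a)) / (Real.exp a - Real.exp (-a)) ∧
        |2 * Real.log ((z - 2 * Real.cosh b * Real.exp (-a)) /
            (Real.exp a - Real.exp (-a))) - 2 * b|
          ≤ C * Real.exp (-2 * a - 2 * b) := by
  intro η hη
  set q : ℝ := 1 - Real.exp (-(2*η)) with hqdef
  set r : ℝ := 1 - Real.exp (-(4*η)) with hrdef
  have hq : 0 < q := by
    have h := Real.exp_lt_one_iff.mpr (by linarith : -(2*η) < 0)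
    rw [hqdef]; linarith
  have hr : 0 < r := by
    have h := Real.exp_lt_one_iff.mpr (by linarith : -(4*η) < 0)
    rw [hrdef]; linarith
  refine ⟨32 / (q^2 * r), by positivity, ?_⟩
  intro a b z z' ha hb hzz' hsum hprod
  have ha0 : 0 < a := lt_of_lt_of_le hη ha
  have hb0 : 0 < b := lt_of_lt_of_le hη hb
  have hsa : 0 < Real.sinh a := Real.sinh_pos_iff.mpr ha0
  have hsb : 0 < Real.sinh b := Real.sinh_pos_iff.mpr hb0
  have hcb : 0 < Real.cosh b := Real.cosh_pos b
  have hca2 := Real.cosh_sq a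
  have hcb2 := Real.cosh_sq b
  have hK16 : (z - z') ^ 2 = 16 * (Real.sinh a ^ 2 * Real.sinh b ^ 2 - 1) := by
    have h1 : (z - z') ^ 2 = (z + z') ^ 2 - 4 * (z * z') := by ring
    rw [hsum, hprod] at h1
    rw [h1]
    linear_combination (16 * Real.sinh b ^ 2 + 16) * hca2 - 16 * hcb2
      + 16 * Real.cosh a ^ 2 * hcb2 - 16 * hca2
  have hKnn : 0 ≤ Real.sinh a ^ 2 * Real.sinh b ^ 2 - 1 := by
    linarith [sq_nonneg (z - z'), hK16]
  set s : ℝ := Real.sqrt (Real.sinh a ^ 2 * Real.sinh b ^ 2 - 1) with hsdef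
  have hs0 : 0 ≤ s := Real.sqrt_nonneg _
  have hs2 : s ^ 2 = Real.sinh a ^ 2 * Real.sinh b ^ 2 - 1 := Real.sq_sqrt hKnn
  have hzm : z - z' = 4 * s := by
    have h0 : (z - z' - 4*s) * (z - z' + 4*s) = 0 := by
      linear_combination hK16 - 16 * hs2
    rcases mul_eq_zero.mp h0 with h | h
    · linarith
    · have h1 : z - z' = 0 := by linarith
      have h2 : s = 0 := by linarith
      linarith
  have hz : z = 2 * Real.cosh a * Real.cosh b + 2 * s := by
    linear_combination (1/2) * hsum + (1/2) * hzm
  have hsinh_a : Real.cosh a - Real.exp (-a) = Real.sinh a := by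
    rw [Real.sinh_eq, Real.cosh_eq]; ring
  have hden : Real.exp a - Real.exp (-a) = 2 * Real.sinh a := by
    rw [Real.sinh_eq]; ring
  have hN : z - 2 * Real.cosh b * Real.exp (-a)
      = 2 * Real.cosh b * Real.sinh a + 2 * s := by
    rw [hz]; linear_combination 2 * Real.cosh b * hsinh_a
  have hA : (z - 2 * Real.cosh b * Real.exp (-a)) / (Real.exp a - Real.exp (-a))
      = Real.cosh b + s / Real.sinh a := by
    rw [hN, hden]; field_simp
  set A : ℝ := Real.cosh b + s / Real.sinh a with hAdef
  have hsdivnn : 0 ≤ s / Real.sinh a := div_nonneg hs0 hsa.le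
  have hApos : 0 < A := by rw [hAdef]; linarith
  rw [hA]
  refine ⟨hApos, ?_⟩
  have hexpb := Real.cosh_add_sinh b
  -- s ≤ sinh a * sinh b
  have hsle : s ≤ Real.sinh a * Real.sinh b := by
    have h1 : Real.sinh a ^ 2 * Real.sinh b ^ 2 - 1 ≤ (Real.sinh a * Real.sinh b)^2 := by
      have h0 : (Real.sinh a * Real.sinh b)^2 = Real.sinh a ^2 * Real.sinh b ^2 := by ring
      linarith
    calc s ≤ Real.sqrt ((Real.sinh a * Real.sinh b)^2) := Real.sqrt_le_sqrt h1
      _ = Real.sinh a * Real.sinh b := Real.sqrt_sq (by positivity)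
  have hsdiv : s / Real.sinh a ≤ Real.sinh b := by
    rw [div_le_iff₀ hsa]
    calc s ≤ Real.sinh a * Real.sinh b := hsle
      _ = Real.sinh b * Real.sinh a := mul_comm _ _
  have hAle : A ≤ Real.exp b := by rw [hAdef]; linarith
  -- gap bound
  have hd : (Real.sinh a * Real.sinh b - s) * (Real.sinh a * Real.sinh b + s) = 1 := by
    linear_combination -hs2
  have hsumpos : 0 < Real.sinh a * Real.sinh b + s := by
    have := mul_pos hsa hsb; linarith
  have hgap1 : Real.sinh a * Real.sinh b - s ≤ 1 / (Real.sinh a * Real.sinh b) := by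
    have h1 : Real.sinh a * Real.sinh b - s = 1 / (Real.sinh a * Real.sinh b + s) := by
      field_simp
      linear_combination hd
    rw [h1]
    apply one_div_le_one_div_of_le (mul_pos hsa hsb)
    linarith
  have hEA : Real.exp b - A = (Real.sinh a * Real.sinh b - s) / Real.sinh a := by
    rw [hAdef, ← hexpb]
    field_simp
    ring
  have hgap : Real.exp b - A ≤ 1 / (Real.sinh a ^ 2 * Real.sinh b) := by
    rw [hEA]
    calc (Real.sinh a * Real.sinh b - s) / Real.sinh a
        ≤ (1 / (Real.sinh a * Real.sinh b)) / Real.sinh a := by gcongr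
      _ = 1 / (Real.sinh a ^ 2 * Real.sinh b) := by
          rw [div_div]; ring_nf
  -- log bound
  have hlogle : Real.log A ≤ b := by
    calc Real.log A ≤ Real.log (Real.exp b) := Real.log_le_log hApos hAle
      _ = b := Real.log_exp b
  have hlog1 : b - Real.log A ≤ (Real.exp b - A) / A := by
    have h1 : Real.log (Real.exp b / A) ≤ Real.exp b / A - 1 :=
      Real.log_le_sub_one_of_pos (by positivity)
    have h2 : Real.log (Real.exp b / A) = b - Real.log A := by
      rw [Real.log_div (Real.exp_pos b).ne' hApos.ne', Real.log_exp]
    have h3 : Real.exp b / A - 1 = (Real.exp b - A) / A := by field_simp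
    rw [h2, h3] at h1
    exact h1
  have habs : |2 * Real.log A - 2 * b| = 2 * (b - Real.log A) := by
    rw [abs_of_nonpos (by linarith)]; ring
  rw [habs]
  have hcble : Real.cosh b ≤ A := by rw [hAdef]; linarith
  have hstep : 2 * (b - Real.log A) ≤ 2 / (Real.sinh a ^ 2 * Real.sinh b * Real.cosh b) := by
    have hgapnn : 0 ≤ Real.exp b - A := by linarith
    have h1 : (Real.exp b - A) / A ≤ (Real.exp b - A) / Real.cosh b := by gcongr
    have h2 : (Real.exp b - A) / Real.cosh b
        ≤ (1 / (Real.sinh a ^ 2 * Real.sinh b)) / Real.cosh b := by gcongr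
    have h3 : (1 / (Real.sinh a ^ 2 * Real.sinh b)) / Real.cosh b
        = 1 / (Real.sinh a ^ 2 * Real.sinh b * Real.cosh b) := by rw [div_div]
    rw [h3] at h2
    have h4 : 1 / (Real.sinh a ^ 2 * Real.sinh b * Real.cosh b)
        = (1/2) * (2 / (Real.sinh a ^ 2 * Real.sinh b * Real.cosh b)) := by ring
    linarith
  -- size estimate
  have hea : 0 < Real.exp a := Real.exp_pos a
  have heb : 0 < Real.exp b := Real.exp_pos b
  have hsa_lb : q / 2 * Real.exp a ≤ Real.sinh a := by
    have h1 : Real.exp (-(2*a)) ≤ Real.exp (-(2*η)) := Real.exp_le_exp.mpr (by linarith)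
    have h2 : Real.exp (-a) = Real.exp a * Real.exp (-(2*a)) := by
      rw [← Real.exp_add]; ring_nf
    have h5 : Real.exp a * Real.exp (-(2*a)) ≤ Real.exp a * Real.exp (-(2*η)) :=
      mul_le_mul_of_nonneg_left h1 hea.le
    rw [Real.sinh_eq, h2, hqdef]
    linarith [h5]
  have hsbcb_lb : r / 4 * (Real.exp b)^2 ≤ Real.sinh b * Real.cosh b := by
    have h1 : Real.exp (-(4*b)) ≤ Real.exp (-(4*η)) := Real.exp_le_exp.mpr (by linarith)
    have h2 : Real.exp (-b) * Real.exp (-b) = (Real.exp b)^2 * Real.exp (-(4*b)) := by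
      rw [← Real.exp_add, pow_two, ← Real.exp_add, ← Real.exp_add]; ring_nf
    have h4 : (Real.exp b)^2 * Real.exp (-(4*b)) ≤ (Real.exp b)^2 * Real.exp (-(4*η)) :=
      mul_le_mul_of_nonneg_left h1 (by positivity)
    rw [Real.sinh_eq, Real.cosh_eq, hrdef]
    have h5 : (Real.exp b - Real.exp (-b)) / 2 * ((Real.exp b + Real.exp (-b)) / 2)
        = ((Real.exp b)^2 - Real.exp (-b) * Real.exp (-b)) / 4 := by ring
    linarith [h2, h4, h5]
  have hsa2 : q^2/4 * (Real.exp a)^2 ≤ Real.sinh a ^ 2 := by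
    have h1 : (q/2 * Real.exp a)^2 ≤ Real.sinh a ^ 2 :=
      pow_le_pow_left₀ (by positivity) hsa_lb 2
    have h2 : (q/2 * Real.exp a)^2 = q^2/4 * (Real.exp a)^2 := by ring
    linarith [h1, h2]
  set P : ℝ := Real.sinh a ^ 2 * Real.sinh b * Real.cosh b with hP
  have hPpos : 0 < P := by rw [hP]; positivity
  have hPlb : q^2*r/16 * ((Real.exp a)^2*(Real.exp b)^2) ≤ P := by
    have h := mul_le_mul hsa2 hsbcb_lb (by positivity) (by positivity)
    calc q^2*r/16 * ((Real.exp a)^2*(Real.exp b)^2)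
        = (q^2/4*(Real.exp a)^2)*(r/4*(Real.exp b)^2) := by ring
      _ ≤ Real.sinh a ^ 2 * (Real.sinh b * Real.cosh b) := h
      _ = P := by rw [hP]; ring
  have hE : (Real.exp a)^2*(Real.exp b)^2 = Real.exp (2*a+2*b) := by
    rw [pow_two, pow_two, ← Real.exp_add, ← Real.exp_add, ← Real.exp_add]
    ring_nf
  have hEpos : 0 < (Real.exp a)^2*(Real.exp b)^2 := by positivity
  have hEinv : Real.exp (-2*a-2*b) = ((Real.exp a)^2*(Real.exp b)^2)⁻¹ := by
    rw [hE, ← Real.exp_neg]; ring_nf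
  have hfin : 2 / P ≤ (32/(q^2*r)) * Real.exp (-2*a-2*b) := by
    rw [hEinv, ← div_eq_mul_inv, div_le_div_iff₀ hPpos hEpos]
    have hCpos : (0:ℝ) < 32/(q^2*r) := by positivity
    have h5 := mul_le_mul_of_nonneg_left hPlb hCpos.le
    have h6 : (32/(q^2*r)) * (q^2*r/16 * ((Real.exp a)^2*(Real.exp b)^2))
        = 2 * ((Real.exp a)^2*(Real.exp b)^2) := by
      field_simp
      ring
    linarith
  linarith [hstep, hfin]
end

section
/- Let a > 0 be real and let s : ℕ → ℝ satisfy the recurrence s(n+1) + s(n−1) = (e^{a} + e^{−a})·s(n) for all n ≥ 1. Define A = (s(1) − s(0)·e^{−a})/(e^{a} − e^{−a}) and assume A > 0. Then the sequence n ↦ 2·arccosh(s(n)/2) − 2·n·a converges to 2·log A as n → ∞. -/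
/-- The real inverse hyperbolic cosine, `arccosh x = log (x + √(x² − 1))`. -/
noncomputable def arccosh (x : ℝ) : ℝ := Real.log (x + Real.sqrt (x ^ 2 - 1))

/-- Asymptotics of the Fricke trace recurrence: if `s(n+1) + s(n−1) = (eᵃ + e⁻ᵃ)·s(n)`
for `n ≥ 1`, and `A = (s(1) − s(0)·e⁻ᵃ)/(eᵃ − e⁻ᵃ) > 0`, then
`2·arccosh(s(n)/2) − 2·n·a → 2·log A` as `n → ∞`. -/
theorem fricke_recurrence_asymptotics (a : ℝ) (ha : 0 < a) (s : ℕ → ℝ)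
    (hrec : ∀ n : ℕ, s (n + 2) + s n = (Real.exp a + Real.exp (-a)) * s (n + 1))
    (hA : 0 < (s 1 - s 0 * Real.exp (-a)) / (Real.exp a - Real.exp (-a))) :
    Filter.Tendsto (fun n : ℕ => 2 * arccosh (s n / 2) - 2 * n * a)
      Filter.atTop
      (nhds (2 * Real.log ((s 1 - s 0 * Real.exp (-a)) /
        (Real.exp a - Real.exp (-a))))) := by
  set A : ℝ := (s 1 - s 0 * Real.exp (-a)) / (Real.exp a - Real.exp (-a)) with hAdef
  set B : ℝ := s 0 - A with hBdef
  have hE1 : (1:ℝ) < Real.exp a := by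
    have := Real.exp_lt_exp.mpr ha
    simpa using this
  have hF1 : Real.exp (-a) < 1 := by
    have := Real.exp_lt_exp.mpr (neg_lt_zero.mpr ha)
    simpa using this
  have hd : 0 < Real.exp a - Real.exp (-a) := by linarith
  have hEF : Real.exp a * Real.exp (-a) = 1 := by
    rw [← Real.exp_add]; simp
  have hA1 : A * (Real.exp a - Real.exp (-a)) = s 1 - s 0 * Real.exp (-a) := by
    rw [hAdef]; field_simp
  -- closed form
  have key : ∀ n : ℕ, s n = A * Real.exp (n * a) + B * Real.exp (-(n * a)) := by
    have h2 : ∀ n : ℕ, s n = A * Real.exp (n * a) + B * Real.exp (-(n * a)) ∧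
        s (n+1) = A * Real.exp ((n+1) * a) + B * Real.exp (-((n+1) * a)) := by
      intro n
      induction n with
      | zero =>
        constructor
        · rw [hBdef]; push_cast; simp
        · push_cast
          norm_num
          rw [hBdef]
          nlinarith [hA1]
      | succ n ih =>
        constructor
        · push_cast
          exact ih.2
        · have hr := hrec n
          rw [show n + 2 = n + 1 + 1 from rfl] at hr
          have e1 : Real.exp ((((n:ℝ)+1)+1) * a) = Real.exp ((n:ℝ)*a) * Real.exp a * Real.exp a := by
            rw [← Real.exp_add, ← Real.exp_add]; congr 1; ring
          have e2 : Real.exp (-((((n:ℝ)+1)+1) * a)) = Real.exp (-((n:ℝ)*a)) * Real.exp (-a) * Real.exp (-a) := by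
            rw [← Real.exp_add, ← Real.exp_add]; congr 1; ring
          have e3 : Real.exp (((n:ℝ)+1) * a) = Real.exp ((n:ℝ)*a) * Real.exp a := by
            rw [← Real.exp_add]; congr 1; ring
          have e4 : Real.exp (-(((n:ℝ)+1) * a)) = Real.exp (-((n:ℝ)*a)) * Real.exp (-a) := by
            rw [← Real.exp_add]; congr 1; ring
          push_cast at ih ⊢
          rw [e1, e2]
          rw [e3, e4] at ih
          linear_combination hr - ih.1 + (Real.exp a + Real.exp (-a)) * ih.2
            + (A * Real.exp ((n:ℝ)*a) + B * Real.exp (-((n:ℝ)*a))) * hEF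
    exact fun n => (h2 n).1
  -- g n := s n * exp(-(n a)) tends to A
  have hg : Filter.Tendsto (fun n : ℕ => s n * Real.exp (-(n * a))) Filter.atTop (nhds A) := by
    have hform : ∀ n : ℕ, s n * Real.exp (-(n * a)) = A + B * Real.exp (-(n * a)) ^ 2 := by
      intro n
      have h1 : Real.exp (n * a) * Real.exp (-(n * a)) = 1 := by
        rw [← Real.exp_add]; simp
      rw [key n]; nlinarith [h1]
    have h0 : Filter.Tendsto (fun n : ℕ => Real.exp (-(n * a))) Filter.atTop (nhds 0) := by
      apply Real.tendsto_exp_atBot.comp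
      apply Filter.tendsto_neg_atBot_iff.mpr
      exact Filter.Tendsto.atTop_mul_const ha tendsto_natCast_atTop_atTop
    have : Filter.Tendsto (fun n : ℕ => A + B * Real.exp (-(n * a)) ^ 2)
        Filter.atTop (nhds (A + B * 0 ^ 2)) := by
      exact Filter.Tendsto.const_add _ (Filter.Tendsto.const_mul _ (h0.pow 2))
    simpa [hform] using this.congr (fun n => (hform n).symm)
  -- s n → ∞
  have hs_top : Filter.Tendsto s Filter.atTop Filter.atTop := by
    have := Filter.Tendsto.pos_mul_atTop hA hg
      (Real.tendsto_exp_atTop.comp (Filter.Tendsto.atTop_mul_const ha tendsto_natCast_atTop_atTop))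
    refine this.congr (fun n => ?_)
    simp only [Function.comp]
    rw [mul_assoc, ← Real.exp_add]
    simp
  -- f n → A
  have hf : Filter.Tendsto
      (fun n : ℕ => Real.exp (-(n * a)) * (s n / 2 + Real.sqrt ((s n / 2) ^ 2 - 1)))
      Filter.atTop (nhds A) := by
    have hform : ∀ n : ℕ, Real.exp (-(n * a)) * (s n / 2 + Real.sqrt ((s n / 2) ^ 2 - 1))
        = s n * Real.exp (-(n * a)) / 2
          + Real.sqrt ((s n * Real.exp (-(n * a)) / 2) ^ 2 - Real.exp (-(n * a)) ^ 2) := by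
      intro n
      have he : (0:ℝ) ≤ Real.exp (-(n * a)) := (Real.exp_pos _).le
      have hsq : Real.exp (-(n * a)) * Real.sqrt ((s n / 2) ^ 2 - 1)
          = Real.sqrt (Real.exp (-(n * a)) ^ 2 * ((s n / 2) ^ 2 - 1)) := by
        rw [Real.sqrt_mul (sq_nonneg _), Real.sqrt_sq he]
      rw [mul_add, hsq]
      congr 1
      · ring
      · congr 1
        ring
    have h0 : Filter.Tendsto (fun n : ℕ => Real.exp (-(n * a))) Filter.atTop (nhds 0) := by
      apply Real.tendsto_exp_atBot.comp
      apply Filter.tendsto_neg_atBot_iff.mpr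
      exact Filter.Tendsto.atTop_mul_const ha tendsto_natCast_atTop_atTop
    have hlim : Filter.Tendsto
        (fun n : ℕ => s n * Real.exp (-(n * a)) / 2
          + Real.sqrt ((s n * Real.exp (-(n * a)) / 2) ^ 2 - Real.exp (-(n * a)) ^ 2))
        Filter.atTop (nhds (A / 2 + Real.sqrt ((A / 2) ^ 2 - 0 ^ 2))) := by
      apply Filter.Tendsto.add (hg.div_const 2)
      exact Filter.Tendsto.sqrt (((hg.div_const 2).pow 2).sub (h0.pow 2))
    have hval : A / 2 + Real.sqrt ((A / 2) ^ 2 - 0 ^ 2) = A := by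
      rw [show (A/2)^2 - 0^2 = (A/2)^2 by ring, Real.sqrt_sq (by linarith : (0:ℝ) ≤ A/2)]
      ring
    rw [← hval]
    exact hlim.congr (fun n => (hform n).symm)
  -- combine
  have hlog : Filter.Tendsto
      (fun n : ℕ => 2 * Real.log (Real.exp (-(n * a)) * (s n / 2 + Real.sqrt ((s n / 2) ^ 2 - 1))))
      Filter.atTop (nhds (2 * Real.log A)) :=
    Filter.Tendsto.const_mul 2 ((Real.continuousAt_log hA.ne').tendsto.comp hf)
  refine hlog.congr' ?_
  filter_upwards [hs_top.eventually (Filter.eventually_gt_atTop 2)] with n hn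
  have hx : (0:ℝ) < s n / 2 + Real.sqrt ((s n / 2) ^ 2 - 1) := by
    have : (0:ℝ) ≤ Real.sqrt ((s n / 2) ^ 2 - 1) := Real.sqrt_nonneg _
    linarith
  rw [Real.log_mul (Real.exp_ne_zero _) hx.ne', Real.log_exp, arccosh]
  ring
end

section
/- Let r ≥ 1 be real and let z, z' ∈ ℤ² be linearly independent over ℝ with Euclidean norms ‖z‖ ≤ r and ‖z'‖ ≤ r. Then the angle θ ∈ [0, π] between z and z' satisfies sin θ ≥ r^{−2}; in particular θ ≥ r^{−2}. -/
/-- The image of an integer vector in the Euclidean plane. -/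
def intVecToE (z : Fin 2 → ℤ) : EuclideanSpace ℝ (Fin 2) := WithLp.toLp 2 (fun i => (z i : ℝ))

/-- Two linearly independent integer vectors of Euclidean norm at most `r` make an
angle `θ` with `sin θ ≥ r⁻²`; in particular `θ ≥ r⁻²`. -/
theorem angle_lower_bound_of_integer_vectors (r : ℝ) (hr : 1 ≤ r) (z z' : Fin 2 → ℤ)
    (hind : LinearIndependent ℝ ![intVecToE z, intVecToE z'])
    (hz : ‖intVecToE z‖ ≤ r) (hz' : ‖intVecToE z'‖ ≤ r) :
    r ^ (-2 : ℤ) ≤ Real.sin (InnerProductGeometry.angle (intVecToE z) (intVecToE z')) ∧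
    r ^ (-2 : ℤ) ≤ InnerProductGeometry.angle (intVecToE z) (intVecToE z') := by
  set x := intVecToE z with hx
  set y := intVecToE z' with hy
  have hpair := LinearIndependent.pair_iff.mp hind
  -- the integer determinant is nonzero
  have hdet : z 0 * z' 1 - z 1 * z' 0 ≠ 0 := by
    intro h0
    have h1 := hpair ((z' 1 : ℝ)) (-(z 1 : ℝ)) ?_
    · have hz1 : (z 1 : ℝ) = 0 := by
        have := h1.2; linarith [neg_eq_zero.mp this]
      have hz'1 : (z' 1 : ℝ) = 0 := h1.1
      have h2 := hpair ((z' 0 : ℝ)) (-(z 0 : ℝ)) ?_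
      · have hz0 : (z 0 : ℝ) = 0 := by
          have := h2.2; linarith [neg_eq_zero.mp this]
        have h3 := hpair 1 0 ?_
        · exact one_ne_zero h3.1
        · ext i
          fin_cases i <;>
            simp [hx, intVecToE, hz0, hz1]
      · ext i
        fin_cases i <;>
          · simp only [hx, hy, intVecToE, PiLp.add_apply, PiLp.smul_apply, smul_eq_mul, PiLp.toLp_apply,
              PiLp.zero_apply]
            push_cast
            try rw [hz1]
            try rw [hz'1]
            ring
    · ext i
      fin_cases i <;>
        · simp only [hx, hy, intVecToE, PiLp.add_apply, PiLp.smul_apply, smul_eq_mul, PiLp.toLp_apply,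
            PiLp.zero_apply]
          have : ((z 0 * z' 1 - z 1 * z' 0 : ℤ) : ℝ) = 0 := by exact_mod_cast h0
          push_cast at this ⊢
          nlinarith [this]
  have hdet1 : (1 : ℝ) ≤ ((z 0 * z' 1 - z 1 * z' 0 : ℤ) : ℝ) ^ 2 := by
    have : (1 : ℤ) ≤ (z 0 * z' 1 - z 1 * z' 0) ^ 2 := by
      rcases lt_or_gt_of_ne hdet with h | h
      · nlinarith
      · nlinarith
    exact_mod_cast this
  -- inner products
  have hinner : (inner ℝ x x : ℝ) * (inner ℝ y y : ℝ) - (inner ℝ x y : ℝ) * (inner ℝ x y : ℝ)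
      = ((z 0 * z' 1 - z 1 * z' 0 : ℤ) : ℝ) ^ 2 := by
    simp only [hx, hy, intVecToE, PiLp.inner_apply, RCLike.inner_apply, conj_trivial,
      Fin.sum_univ_two, PiLp.toLp_apply]
    push_cast
    ring
  have hkey := InnerProductGeometry.sin_angle_mul_norm_mul_norm x y
  rw [hinner] at hkey
  have hsqrt : (1 : ℝ) ≤ Real.sqrt (((z 0 * z' 1 - z 1 * z' 0 : ℤ) : ℝ) ^ 2) := by
    rw [Real.sqrt_sq_eq_abs]
    have : (1 : ℤ) ≤ |z 0 * z' 1 - z 1 * z' 0| := Int.one_le_abs hdet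
    calc (1:ℝ) ≤ ((|z 0 * z' 1 - z 1 * z' 0| : ℤ) : ℝ) := by exact_mod_cast this
      _ = _ := by push_cast; rfl
  have hnorm : ‖x‖ * ‖y‖ ≤ r * r :=
    mul_le_mul hz hz' (norm_nonneg _) (le_trans zero_le_one hr)
  have hrr : (0:ℝ) < r * r := by nlinarith
  have hsin : r ^ (-2 : ℤ) ≤ Real.sin (InnerProductGeometry.angle x y) := by
    have h1 : (1 : ℝ) ≤ Real.sin (InnerProductGeometry.angle x y) * (‖x‖ * ‖y‖) :=
      hkey ▸ hsqrt
    have hsinpos : 0 < Real.sin (InnerProductGeometry.angle x y) := by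
      by_contra h
      push_neg at h
      nlinarith [mul_nonneg (norm_nonneg x) (norm_nonneg y)]
    have : (1 : ℝ) ≤ Real.sin (InnerProductGeometry.angle x y) * (r * r) := by
      nlinarith
    rw [show ((-2 : ℤ)) = -(2 : ℕ) by norm_num, zpow_neg, zpow_natCast,
      inv_le_iff_one_le_mul₀ (by positivity)]
    nlinarith
  refine ⟨hsin, le_trans hsin ?_⟩
  exact Real.sin_le (InnerProductGeometry.angle_nonneg x y)
end

section
/- Let r ≥ 1 and 0 ≤ θ ≤ π/2 be real numbers, and let S be a finite set of nonzero vectors in ℤ² that are pairwise linearly independent over ℝ, each of Euclidean norm at most r, and such that the angle between any two elements of S is at most θ. Then the cardinality of S is at most θ·r² + 1. -/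
/-- Complex version of an integer vector. -/
def intVecToC (z : Fin 2 → ℤ) : ℂ := ⟨(z 0 : ℝ), (z 1 : ℝ)⟩

lemma intVecToC_re (z : Fin 2 → ℤ) : (intVecToC z).re = (z 0 : ℝ) := rfl
lemma intVecToC_im (z : Fin 2 → ℤ) : (intVecToC z).im = (z 1 : ℝ) := rfl

lemma norm_intVec (z : Fin 2 → ℤ) : ‖intVecToE z‖ = ‖intVecToC z‖ := by
  rw [EuclideanSpace.norm_eq, Complex.norm_def, Complex.normSq_apply,
    intVecToC_re, intVecToC_im, Fin.sum_univ_two]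
  norm_num [intVecToE]
  ring_nf

lemma inner_intVec (z z' : Fin 2 → ℤ) :
    (inner ℝ (intVecToE z) (intVecToE z') : ℝ)
      = inner ℝ (intVecToC z) (intVecToC z') := by
  rw [Complex.inner, PiLp.inner_apply, Fin.sum_univ_two, Complex.mul_re]
  simp [intVecToE, intVecToC, RCLike.inner_apply]

lemma angle_intVec (z z' : Fin 2 → ℤ) :
    InnerProductGeometry.angle (intVecToE z) (intVecToE z')
      = InnerProductGeometry.angle (intVecToC z) (intVecToC z') := by
  rw [InnerProductGeometry.angle, InnerProductGeometry.angle,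
    norm_intVec, norm_intVec, inner_intVec]

lemma abs_toReal_coe (s : ℝ) (h : |s| ≤ Real.pi) : |((s : Real.Angle)).toReal| = |s| := by
  rcases le_or_gt 0 s with hs | hs
  · rw [abs_of_nonneg hs] at h ⊢
    exact Real.Angle.abs_toReal_coe_eq_self_iff.2 ⟨hs, h⟩
  · rw [abs_of_neg hs] at h ⊢
    have := (Real.Angle.abs_toReal_neg_coe_eq_self_iff (θ := -s)).2 ⟨by linarith, h⟩
    rw [show ((s:ℝ):Real.Angle) = -((-s : ℝ) : Real.Angle) by rw [← Real.Angle.coe_neg, neg_neg]]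
    exact this

lemma angle_eq_abs_arg {w z : ℂ} (hw : w ≠ 0) (hz : z ≠ 0) :
    InnerProductGeometry.angle w z = |Complex.arg ((starRingEnd ℂ) w * z)| := by
  haveI : Fact (Module.finrank ℝ ℂ = 2) := ⟨Complex.finrank_real_complex⟩
  rw [Complex.orientation.angle_eq_abs_oangle_toReal hw hz, Complex.oangle,
    abs_toReal_coe _ (Complex.abs_arg_le_pi _)]

lemma angle_ge_im {w z : ℂ} (hw : w ≠ 0) (hz : z ≠ 0) :
    |((starRingEnd ℂ) w * z).im| / (‖w‖ * ‖z‖)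
      ≤ InnerProductGeometry.angle w z := by
  rw [angle_eq_abs_arg hw hz]
  set u := (starRingEnd ℂ) w * z with hu
  have hu0 : u ≠ 0 := mul_ne_zero (by simpa using hw) hz
  have habs : ‖u‖ = ‖w‖ * ‖z‖ := by
    rw [hu, norm_mul, Complex.norm_conj]
  have h1 : |u.im| / (‖w‖ * ‖z‖) = |Real.sin (Complex.arg u)| := by
    rw [Complex.sin_arg, abs_div, ← habs, abs_of_nonneg (norm_nonneg u)]
  rw [h1]
  calc |Real.sin (Complex.arg u)| = Real.sin |Complex.arg u| := by
        rcases le_or_gt 0 (Complex.arg u) with h | h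
        · rw [abs_of_nonneg h, abs_of_nonneg (Real.sin_nonneg_of_nonneg_of_le_pi h
            (Complex.arg_le_pi u))]
        · have hsin : Real.sin u.arg ≤ 0 :=
            Real.sin_nonpos_of_nonpos_of_neg_pi_le h.le (Complex.neg_pi_lt_arg u).le
          rw [abs_of_neg h, Real.sin_neg, abs_of_nonpos hsin]
    _ ≤ |Complex.arg u| := Real.sin_le (abs_nonneg _)

instance : Fact (Module.finrank ℝ ℂ = 2) := ⟨Complex.finrank_real_complex⟩

lemma angle_eq_abs_sub_oangle {a x y : ℂ} (ha : a ≠ 0) (hx : x ≠ 0) (hy : y ≠ 0)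
    (hb : |(Complex.orientation.oangle a y).toReal
        - (Complex.orientation.oangle a x).toReal| ≤ Real.pi) :
    InnerProductGeometry.angle x y
      = |(Complex.orientation.oangle a y).toReal
          - (Complex.orientation.oangle a x).toReal| := by
  haveI : Fact (Module.finrank ℝ ℂ = 2) := ⟨Complex.finrank_real_complex⟩
  set gx := (Complex.orientation.oangle a x).toReal with hgx
  set gy := (Complex.orientation.oangle a y).toReal with hgy
  have h1 : Complex.orientation.oangle x y = ((gy - gx : ℝ) : Real.Angle) := by
    rw [← Complex.orientation.oangle_add hx ha hy, Complex.orientation.oangle_rev a x,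
      Real.Angle.coe_sub, hgx, hgy, Real.Angle.coe_toReal, Real.Angle.coe_toReal]
    abel
  rw [Complex.orientation.angle_eq_abs_oangle_toReal hx hy, h1, abs_toReal_coe _ hb]

/-- Sector count for short lattice directions: a finite set of pairwise linearly
independent integer vectors, each of norm at most `r`, with pairwise angles at most
`θ ≤ π/2`, has cardinality at most `θ·r² + 1`. -/
theorem sector_count (r θ : ℝ) (hr : 1 ≤ r) (hθ0 : 0 ≤ θ) (hθ : θ ≤ Real.pi / 2)
    (S : Finset (Fin 2 → ℤ))
    (hne : ∀ z ∈ S, z ≠ 0)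
    (hind : ∀ z ∈ S, ∀ z' ∈ S, z ≠ z' →
      LinearIndependent ℝ ![intVecToE z, intVecToE z'])
    (hnorm : ∀ z ∈ S, ‖intVecToE z‖ ≤ r)
    (hangle : ∀ z ∈ S, ∀ z' ∈ S, z ≠ z' →
      InnerProductGeometry.angle (intVecToE z) (intVecToE z') ≤ θ) :
    (S.card : ℝ) ≤ θ * r ^ 2 + 1 := by
  haveI : Fact (Module.finrank ℝ ℂ = 2) := ⟨Complex.finrank_real_complex⟩
  have hr0 : (0:ℝ) < r := lt_of_lt_of_le one_pos hr
  have hr2 : (0:ℝ) < r ^ 2 := by positivity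
  have hθr : 0 ≤ θ * r ^ 2 := by positivity
  -- trivial case
  rcases Finset.eq_empty_or_nonempty S with rfl | ⟨b, hb⟩
  · simp; linarith
  -- nonzero complex images
  have hc : ∀ z ∈ S, intVecToC z ≠ 0 := by
    intro z hz h0
    apply hne z hz
    funext i
    fin_cases i
    · have := congrArg Complex.re h0
      rw [intVecToC_re] at this; exact_mod_cast this
    · have := congrArg Complex.im h0
      rw [intVecToC_im] at this; exact_mod_cast this
  set g : (Fin 2 → ℤ) → ℝ :=
    fun z => (Complex.orientation.oangle (intVecToC b) (intVecToC z)).toReal with hg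
  -- g is bounded by π/2 on S
  have hgb : ∀ z ∈ S, |g z| ≤ Real.pi / 2 := by
    intro z hz
    rcases eq_or_ne z b with rfl | hzb
    · have h0 : g z = 0 := by
        show (Complex.orientation.oangle (intVecToC z) (intVecToC z)).toReal = 0
        rw [Complex.orientation.oangle_self, Real.Angle.toReal_zero]
      rw [h0, abs_zero]
      positivity
    · have : |g z| = InnerProductGeometry.angle (intVecToE b) (intVecToE z) := by
        rw [angle_intVec,
          Complex.orientation.angle_eq_abs_oangle_toReal (hc b hb) (hc z hz), hg]
      rw [this]
      exact le_trans (hangle b hb z hz (Ne.symm hzb)) hθ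
  -- pairwise angles equal |g z - g z'|
  have key : ∀ z ∈ S, ∀ z' ∈ S,
      InnerProductGeometry.angle (intVecToE z) (intVecToE z') = |g z' - g z| := by
    intro z hz z' hz'
    have hb' : |g z' - g z| ≤ Real.pi := by
      have h1 := hgb z hz
      have h2 := hgb z' hz'
      calc |g z' - g z| ≤ |g z'| + |g z| := abs_sub (g z') (g z)
        _ ≤ Real.pi / 2 + Real.pi / 2 := add_le_add h2 h1
        _ = Real.pi := by ring
    rw [angle_intVec]
    exact angle_eq_abs_sub_oangle (hc b hb) (hc z hz) (hc z' hz') hb'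
  -- angle lower bound for distinct elements
  have lower : ∀ z ∈ S, ∀ z' ∈ S, z ≠ z' →
      1 / r ^ 2 ≤ InnerProductGeometry.angle (intVecToE z) (intVecToE z') := by
    intro z hz z' hz' hne'
    have hdet : ((starRingEnd ℂ) (intVecToC z) * intVecToC z').im
        = ((z 0 * z' 1 - z 1 * z' 0 : ℤ) : ℝ) := by
      simp [Complex.mul_im, intVecToC]
      push_cast
      ring
    have hd0 : (z 0 * z' 1 - z 1 * z' 0 : ℤ) ≠ 0 := by
      intro h0
      have hli := hind z hz z' hz' hne'
      rw [LinearIndependent.pair_iff] at hli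
      have h1 : ((z' 1 : ℝ)) • intVecToE z + (-(z 1 : ℝ)) • intVecToE z' = 0 := by
        ext i
        fin_cases i <;>
        · simp [intVecToE]
          push_cast
          have : (z 0 : ℝ) * z' 1 - z 1 * z' 0 = 0 := by exact_mod_cast congrArg (Int.cast : ℤ → ℝ) h0
          nlinarith [this]
      have h2 : ((z' 0 : ℝ)) • intVecToE z + (-(z 0 : ℝ)) • intVecToE z' = 0 := by
        ext i
        fin_cases i <;>
        · simp [intVecToE]
          push_cast
          have : (z 0 : ℝ) * z' 1 - z 1 * z' 0 = 0 := by exact_mod_cast congrArg (Int.cast : ℤ → ℝ) h0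
          nlinarith [this]
      have c1 := hli _ _ h1
      have c2 := hli _ _ h2
      apply hne z hz
      funext i
      fin_cases i
      · have : (z 0 : ℝ) = 0 := by
          have := c2.2; simpa using this
        exact_mod_cast this
      · have : (z 1 : ℝ) = 0 := by
          have := c1.2; simpa using this
        exact_mod_cast this
    have hdge : (1:ℝ) ≤ |((starRingEnd ℂ) (intVecToC z) * intVecToC z').im| := by
      rw [hdet, ← Int.cast_abs]
      exact_mod_cast Int.one_le_abs hd0
    have hnz : ‖intVecToC z‖ ≤ r := by rw [← norm_intVec]; exact hnorm z hz
    have hnz' : ‖intVecToC z'‖ ≤ r := by rw [← norm_intVec]; exact hnorm z' hz'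
    have hpos : 0 < ‖intVecToC z‖ * ‖intVecToC z'‖ := by
      apply mul_pos <;> [exact (norm_pos_iff.mpr (hc z hz)); exact (norm_pos_iff.mpr (hc z' hz'))]
    have habsr : ‖intVecToC z‖ * ‖intVecToC z'‖ ≤ r ^ 2 := by
      nlinarith [norm_nonneg (intVecToC z), norm_nonneg (intVecToC z')]
    have step : (1:ℝ) / r ^ 2
        ≤ |((starRingEnd ℂ) (intVecToC z) * intVecToC z').im|
          / (‖intVecToC z‖ * ‖intVecToC z'‖) := by
      rw [div_le_div_iff₀ hr2 hpos]
      nlinarith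
    rw [angle_intVec]
    exact le_trans step (angle_ge_im (hc z hz) (hc z' hz'))
  -- choose the minimizer of g
  obtain ⟨m, hmS, hmin⟩ := S.exists_min_image g ⟨b, hb⟩
  have hlb : ∀ z ∈ S, 0 ≤ g z - g m := fun z hz => sub_nonneg.2 (hmin z hz)
  have hub : ∀ z ∈ S, g z - g m ≤ θ := by
    intro z hz
    rcases eq_or_ne z m with rfl | hzm
    · simpa using hθ0
    · have h2 := hangle m hmS z hz (Ne.symm hzm)
      rw [key m hmS z hz] at h2
      calc g z - g m ≤ |g z - g m| := le_abs_self _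
        _ ≤ θ := h2
  set F : (Fin 2 → ℤ) → ℤ := fun z => ⌊(g z - g m) * r ^ 2⌋ with hF
  have hmaps : ∀ z ∈ S, F z ∈ Finset.Icc (0:ℤ) ⌊θ * r ^ 2⌋ := by
    intro z hz
    rw [Finset.mem_Icc]
    exact ⟨Int.floor_nonneg.2 (mul_nonneg (hlb z hz) hr2.le),
      Int.floor_le_floor (mul_le_mul_of_nonneg_right (hub z hz) hr2.le)⟩
  have hinj : ∀ z ∈ S, ∀ z' ∈ S, F z = F z' → z = z' := by
    intro z hz z' hz' hFe
    by_contra hne'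
    have h1 := Int.abs_sub_lt_one_of_floor_eq_floor hFe
    have heq : (g z - g m) * r ^ 2 - (g z' - g m) * r ^ 2 = (g z - g z') * r ^ 2 := by ring
    rw [heq, abs_mul, abs_of_pos hr2, abs_sub_comm] at h1
    have h3 := lower z hz z' hz' hne'
    rw [key z hz z' hz'] at h3
    have h4 : (1:ℝ) ≤ |g z' - g z| * r ^ 2 := (div_le_iff₀ hr2).1 h3
    linarith
  have hcard : S.card ≤ (Finset.Icc (0:ℤ) ⌊θ * r ^ 2⌋).card :=
    Finset.card_le_card_of_injOn F hmaps (fun z hz z' hz' => hinj z hz z' hz')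
  rw [Int.card_Icc] at hcard
  have hfl0 : (0:ℤ) ≤ ⌊θ * r ^ 2⌋ := Int.floor_nonneg.2 hθr
  have htn : ((⌊θ * r ^ 2⌋ + 1 - 0).toNat : ℤ) = ⌊θ * r ^ 2⌋ + 1 := by omega
  calc (S.card : ℝ) ≤ (((⌊θ * r ^ 2⌋ + 1 - 0).toNat : ℤ) : ℝ) := by exact_mod_cast hcard
    _ = (⌊θ * r ^ 2⌋ : ℝ) + 1 := by rw [htn]; push_cast; ring
    _ ≤ θ * r ^ 2 + 1 := by
        have := Int.floor_le (θ * r ^ 2)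
        linarith
end

section
/- There is an absolute constant C > 0 with the following property. Let N ≥ 1 be an integer, 0 ≤ θ ≤ π/2 and R > 0 real numbers, and let P₀, P₁, …, P_N ∈ ℤ² be points such that the consecutive difference vectors dᵢ = P_{i+1} − P_i (0 ≤ i ≤ N−1) are nonzero, pairwise linearly independent over ℝ, the angle between any two of them is at most θ, and the total length Σ_{i=0}^{N−1} ‖dᵢ‖ is at most R (Euclidean norm). Then N + 1 ≤ C·(R^{2/3}·θ^{1/3} + 1). -/
open Complex

attribute [local instance] Complex.finrank_real_complex_fact

/-- The image of an integer vector in the complex plane. -/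
noncomputable def c2 (z : Fin 2 → ℤ) : ℂ := ⟨(z 0 : ℝ), (z 1 : ℝ)⟩

lemma c2_ne_zero {z : Fin 2 → ℤ} (hz : z ≠ 0) : c2 z ≠ 0 := by
  intro h
  apply hz
  have h0 : (z 0 : ℝ) = 0 := congrArg Complex.re h
  have h1 : (z 1 : ℝ) = 0 := congrArg Complex.im h
  funext i
  fin_cases i <;> simp_all

lemma norm_intVecToE (z : Fin 2 → ℤ) : ‖intVecToE z‖ = ‖c2 z‖ := by
  rw [EuclideanSpace.norm_eq, Complex.norm_def, Complex.normSq_apply]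
  simp [intVecToE, c2, Fin.sum_univ_two, sq]

lemma inner_intVecToE (u v : Fin 2 → ℤ) :
    (inner ℝ (intVecToE u) (intVecToE v) : ℝ) = inner ℝ (c2 u) (c2 v) := by
  rw [Complex.inner]
  simp [intVecToE, c2, PiLp.inner_apply, RCLike.inner_apply, Fin.sum_univ_two, Complex.mul_re]

lemma angle_transfer (u v : Fin 2 → ℤ) :
    InnerProductGeometry.angle (intVecToE u) (intVecToE v)
      = InnerProductGeometry.angle (c2 u) (c2 v) := by
  unfold InnerProductGeometry.angle
  rw [norm_intVecToE, norm_intVecToE, inner_intVecToE]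

lemma amgm3 {x y z : ℝ} (hx : 0 ≤ x) (hy : 0 ≤ y) (hz : 0 ≤ z) :
    27 * (x * y * z) ≤ (x + y + z)^3 := by
  nlinarith [sq_nonneg (x - y), sq_nonneg (y - z), sq_nonneg (x - z), mul_nonneg hx hy,
    mul_nonneg hy hz, mul_nonneg hx hz, mul_nonneg (mul_nonneg hx hy) hz,
    mul_nonneg (add_nonneg (add_nonneg hx hy) hz) (sq_nonneg (x - y)),
    mul_nonneg (add_nonneg (add_nonneg hx hy) hz) (sq_nonneg (y - z)),
    mul_nonneg (add_nonneg (add_nonneg hx hy) hz) (sq_nonneg (x - z))]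

/-- Three-sequence Hölder-type inequality via AM–GM. -/
lemma cube_le {n : ℕ} {g a b : ℕ → ℝ}
    (hg : ∀ k < n, 0 ≤ g k) (ha : ∀ k < n, 0 ≤ a k) (hb : ∀ k < n, 0 ≤ b k)
    (h1 : ∀ k < n, 1 ≤ g k * a k * b k) :
    (n : ℝ)^3 ≤ (∑ k ∈ Finset.range n, g k) * (∑ k ∈ Finset.range n, a k)
      * (∑ k ∈ Finset.range n, b k) := by
  rcases Nat.eq_zero_or_pos n with rfl | hn
  · simp
  set G := ∑ k ∈ Finset.range n, g k with hGdef
  set A := ∑ k ∈ Finset.range n, a k with hAdef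
  set B := ∑ k ∈ Finset.range n, b k with hBdef
  have hg0 : 0 < g 0 := by nlinarith [h1 0 hn, mul_nonneg (ha 0 hn) (hb 0 hn), hg 0 hn]
  have ha0 : 0 < a 0 := by nlinarith [h1 0 hn, mul_nonneg (hg 0 hn) (hb 0 hn), ha 0 hn]
  have hb0 : 0 < b 0 := by nlinarith [h1 0 hn, mul_nonneg (hg 0 hn) (ha 0 hn), hb 0 hn]
  have hG : 0 < G := lt_of_lt_of_le hg0
    (Finset.single_le_sum (fun i hi => hg i (Finset.mem_range.1 hi)) (Finset.mem_range.2 hn))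
  have hA : 0 < A := lt_of_lt_of_le ha0
    (Finset.single_le_sum (fun i hi => ha i (Finset.mem_range.1 hi)) (Finset.mem_range.2 hn))
  have hB : 0 < B := lt_of_lt_of_le hb0
    (Finset.single_le_sum (fun i hi => hb i (Finset.mem_range.1 hi)) (Finset.mem_range.2 hn))
  have hP : 0 < G * A * B := by positivity
  set c : ℝ := ((G * A * B)⁻¹) ^ ((1:ℝ)/3) with hcdef
  have hc : 0 < c := Real.rpow_pos_of_pos (by positivity) _
  have hc3 : c ^ (3:ℕ) = (G * A * B)⁻¹ := by
    rw [hcdef, ← Real.rpow_natCast (((G * A * B)⁻¹) ^ ((1:ℝ)/3)) 3,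
      ← Real.rpow_mul (by positivity)]
    norm_num
  have hkey : ∀ k < n, c ≤ (g k / G + a k / A + b k / B) / 3 := by
    intro k hk
    have hm0 : 0 ≤ (g k / G + a k / A + b k / B) / 3 := by
      have := hg k hk; have := ha k hk; have := hb k hk; positivity
    refine le_of_pow_le_pow_left₀ (n := 3) (by norm_num) hm0 ?_
    rw [hc3]
    have h27 : 27 * ((g k / G) * (a k / A) * (b k / B))
        ≤ ((g k / G) + (a k / A) + (b k / B))^3 :=
      amgm3 (div_nonneg (hg k hk) hG.le) (div_nonneg (ha k hk) hA.le)
        (div_nonneg (hb k hk) hB.le)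
    have hgab : (g k / G) * (a k / A) * (b k / B) = (g k * a k * b k) * (G * A * B)⁻¹ := by
      field_simp
    have h1k := h1 k hk
    have hstep : (G * A * B)⁻¹ ≤ (g k / G) * (a k / A) * (b k / B) := by
      rw [hgab]
      nlinarith [inv_pos.2 hP]
    calc (G * A * B)⁻¹ ≤ (g k / G) * (a k / A) * (b k / B) := hstep
      _ ≤ ((g k / G + a k / A + b k / B) / 3) ^ 3 := by
          rw [div_pow]; rw [le_div_iff₀ (by norm_num)]; nlinarith [h27]
  have hsummed : (n : ℝ) * c ≤ 1 := by
    have h2 : ∑ k ∈ Finset.range n, ((g k / G + a k / A + b k / B) / 3) = 1 := by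
      rw [← Finset.sum_div, Finset.sum_add_distrib, Finset.sum_add_distrib,
        ← Finset.sum_div, ← Finset.sum_div, ← Finset.sum_div]
      rw [← hGdef, ← hAdef, ← hBdef, div_self hG.ne', div_self hA.ne', div_self hB.ne']
      norm_num
    calc (n : ℝ) * c = (Finset.range n).card • c := by simp [mul_comm]
      _ ≤ ∑ k ∈ Finset.range n, ((g k / G + a k / A + b k / B) / 3) :=
          Finset.card_nsmul_le_sum _ _ _ (fun i hi => hkey i (Finset.mem_range.1 hi))
      _ = 1 := h2
  have hnc : (n : ℝ) ≤ c⁻¹ := by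
    have h3 : (n:ℝ) * c ≤ c⁻¹ * c := by rw [inv_mul_cancel₀ hc.ne']; exact hsummed
    exact le_of_mul_le_mul_right h3 hc
  have hpow := pow_le_pow_left₀ (by positivity : (0:ℝ) ≤ (n:ℝ)) hnc 3
  calc ((n:ℝ))^3 ≤ (c⁻¹)^3 := hpow
    _ = (c ^ (3:ℕ))⁻¹ := by rw [inv_pow]
    _ = G * A * B := by rw [hc3, inv_inv]

/-- The core counting estimate: sorting the arguments and applying `cube_le`. -/
lemma sorted_key {N : ℕ} {θ R : ℝ} (hN : 1 ≤ N) (hθ : 0 ≤ θ) (hR : 0 < R)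
    (n t : ℕ → ℝ) (hn : ∀ i, 0 ≤ n i)
    (ht : ∀ i < N, |t i| ≤ θ)
    (hpair : ∀ i < N, ∀ j < N, i ≠ j → 1 ≤ n i * n j * |t j - t i|)
    (hsum : ∑ i ∈ Finset.range N, n i ≤ R) :
    ((N - 1 : ℕ) : ℝ)^3 ≤ 2 * θ * R * R := by
  set T : Fin N → ℝ := fun k => t k with hT
  set σ := Tuple.sort T with hσ
  have hmono : Monotone (T ∘ σ) := Tuple.monotone_sort T
  set idx : ℕ → ℕ := fun k => (σ ⟨min k (N-1), by omega⟩ : Fin N) with hidx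
  have hidxlt : ∀ k, idx k < N := fun k => (σ _).2
  have hinj : ∀ k l, k ≤ N-1 → l ≤ N-1 → idx k = idx l → k = l := by
    intro k l hk hl h
    have h2 : σ ⟨min k (N-1), by omega⟩ = σ ⟨min l (N-1), by omega⟩ := Fin.val_injective h
    have h3 := σ.injective h2
    have h4 : min k (N-1) = min l (N-1) := congrArg Fin.val h3
    omega
  have hidxle : ∀ k l, k ≤ l → l ≤ N - 1 → t (idx k) ≤ t (idx l) := by
    intro k l hkl hl
    have : (⟨min k (N-1), by omega⟩ : Fin N) ≤ ⟨min l (N-1), by omega⟩ := by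
      simp only [Fin.mk_le_mk]; omega
    exact hmono this
  set g : ℕ → ℝ := fun k => t (idx (k+1)) - t (idx k) with hgdef
  set a : ℕ → ℝ := fun k => n (idx k) with hadef
  set b : ℕ → ℝ := fun k => n (idx (k+1)) with hbdef
  have hg : ∀ k < N - 1, 0 ≤ g k := by
    intro k hk
    simp only [hgdef, sub_nonneg]
    exact hidxle k (k+1) (by omega) (by omega)
  have h1 : ∀ k < N - 1, 1 ≤ g k * a k * b k := by
    intro k hk
    have hne : idx k ≠ idx (k+1) := by
      intro h; have := hinj k (k+1) (by omega) (by omega) h; omega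
    have hp := hpair (idx k) (hidxlt k) (idx (k+1)) (hidxlt (k+1)) hne
    have habs : |t (idx (k+1)) - t (idx k)| = t (idx (k+1)) - t (idx k) :=
      abs_of_nonneg (by simpa [hgdef] using hg k hk)
    rw [habs] at hp
    calc (1:ℝ) ≤ n (idx k) * n (idx (k+1)) * (t (idx (k+1)) - t (idx k)) := hp
      _ = g k * a k * b k := by simp only [hgdef, hadef, hbdef]; ring
  have hG : ∑ k ∈ Finset.range (N-1), g k ≤ 2 * θ := by
    have htel : ∑ k ∈ Finset.range (N-1), g k = t (idx (N-1)) - t (idx 0) :=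
      Finset.sum_range_sub (fun k => t (idx k)) (N-1)
    rw [htel]
    have h1' := abs_le.1 (ht (idx (N-1)) (hidxlt _))
    have h2' := abs_le.1 (ht (idx 0) (hidxlt _))
    linarith [h1'.1, h1'.2, h2'.1, h2'.2]
  have hsub : ∀ f : ℕ → ℕ, (∀ k l, k < N-1 → l < N-1 → f k = f l → k = l) →
      (∀ k, k < N-1 → f k < N) →
      ∑ k ∈ Finset.range (N-1), n (f k) ≤ R := by
    intro f hfinj hflt
    have him : ∑ k ∈ Finset.range (N-1), n (f k)
        = ∑ m ∈ (Finset.range (N-1)).image f, n m := by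
      rw [Finset.sum_image]
      intro x hx y hy hxy
      exact hfinj x y (Finset.mem_range.1 hx) (Finset.mem_range.1 hy) hxy
    rw [him]
    refine le_trans (Finset.sum_le_sum_of_subset_of_nonneg ?_ (fun i _ _ => hn i)) hsum
    intro m hm
    obtain ⟨k, hk, rfl⟩ := Finset.mem_image.1 hm
    exact Finset.mem_range.2 (hflt k (Finset.mem_range.1 hk))
  have hA : ∑ k ∈ Finset.range (N-1), a k ≤ R :=
    hsub idx (fun k l hk hl h => hinj k l (by omega) (by omega) h) (fun k _ => hidxlt k)
  have hB : ∑ k ∈ Finset.range (N-1), b k ≤ R := by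
    refine hsub (fun k => idx (k+1)) (fun k l hk hl h => ?_) (fun k _ => hidxlt _)
    have := hinj (k+1) (l+1) (by omega) (by omega) h; omega
  have hG0 : 0 ≤ ∑ k ∈ Finset.range (N-1), g k :=
    Finset.sum_nonneg (fun k hk => hg k (Finset.mem_range.1 hk))
  have hA0 : 0 ≤ ∑ k ∈ Finset.range (N-1), a k := Finset.sum_nonneg (fun k _ => hn _)
  have hB0 : 0 ≤ ∑ k ∈ Finset.range (N-1), b k := Finset.sum_nonneg (fun k _ => hn _)
  have hcube := cube_le hg (fun k _ => hn _) (fun k _ => hn _) h1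
  calc ((N - 1 : ℕ) : ℝ)^3 ≤ _ := hcube
    _ ≤ 2 * θ * R * R := by
      have h2θ : (0:ℝ) ≤ 2 * θ := by linarith
      exact mul_le_mul (mul_le_mul hG hA hA0 h2θ) hB hB0 (mul_nonneg h2θ hR.le)

lemma det_ne_zero {u v : Fin 2 → ℤ} (hu : u ≠ 0)
    (h : LinearIndependent ℝ ![intVecToE u, intVecToE v]) :
    u 0 * v 1 - u 1 * v 0 ≠ 0 := by
  intro hdet
  rw [LinearIndependent.pair_iff] at h
  have hdet' : (u 0 : ℝ) * v 1 - (u 1 : ℝ) * v 0 = 0 := by exact_mod_cast hdet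
  by_cases h1 : u 1 = 0
  · have h0 : u 0 ≠ 0 := by
      intro h0; apply hu; funext i; fin_cases i <;> simp [h0, h1]
    have h10 : (u 1 : ℝ) = 0 := by exact_mod_cast h1
    have := h (v 0 : ℝ) (-(u 0 : ℝ)) ?_
    · have : (u 0 : ℝ) = 0 := by linarith [neg_eq_zero.1 this.2]
      exact h0 (by exact_mod_cast this)
    · ext i
      fin_cases i <;>
        simp [intVecToE] <;> nlinarith [hdet', h10]
  · have h10 : (u 1 : ℝ) ≠ 0 := by exact_mod_cast h1
    have := h (v 1 : ℝ) (-(u 1 : ℝ)) ?_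
    · exact h10 (neg_eq_zero.1 this.2)
    · ext i
      fin_cases i <;>
        simp [intVecToE] <;> nlinarith [hdet']

lemma pair_ineq {u v : Fin 2 → ℤ} (hu : u ≠ 0)
    (hli : LinearIndependent ℝ ![intVecToE u, intVecToE v]) :
    (1 : ℝ) ≤ ‖c2 u‖ * ‖c2 v‖
      * |Real.sin (Complex.arg ((starRingEnd ℂ) (c2 u) * c2 v))| := by
  have hdet := det_ne_zero hu hli
  have h1 : (1 : ℝ) ≤ |((u 0 * v 1 - u 1 * v 0 : ℤ) : ℝ)| := by
    rw [← Int.cast_abs]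
    exact_mod_cast Int.one_le_abs hdet
  have him : ((u 0 * v 1 - u 1 * v 0 : ℤ) : ℝ) = ((starRingEnd ℂ) (c2 u) * c2 v).im := by
    simp [c2, Complex.mul_im]
    ring
  have habs : |((starRingEnd ℂ) (c2 u) * c2 v).im|
      = ‖(starRingEnd ℂ) (c2 u) * c2 v‖
        * |Real.sin (Complex.arg ((starRingEnd ℂ) (c2 u) * c2 v))| := by
    rw [Complex.sin_arg, abs_div]
    rcases eq_or_ne ((starRingEnd ℂ) (c2 u) * c2 v) 0 with h | h
    · simp [h]
    · have hpos : 0 < ‖(starRingEnd ℂ) (c2 u) * c2 v‖ := norm_pos_iff.2 h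
      rw [_root_.abs_of_nonneg hpos.le]
      field_simp
  rw [him, habs, norm_mul, Complex.norm_conj] at h1
  linarith [h1]

/-- Localized Jarník chord count: there is an absolute constant `C > 0` such that for
any lattice polyline `P₀, …, P_N` whose consecutive difference vectors are nonzero,
pairwise linearly independent, confined to an angular sector of length `θ ≤ π/2`, and
of total Euclidean length at most `R`, one has `N + 1 ≤ C·(R^{2/3}·θ^{1/3} + 1)`. -/
theorem localized_jarnik_count :
    ∃ C : ℝ, 0 < C ∧
      ∀ (N : ℕ) (θ R : ℝ) (P : ℕ → Fin 2 → ℤ),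
        1 ≤ N → 0 ≤ θ → θ ≤ Real.pi / 2 → 0 < R →
        (∀ i < N, P (i + 1) - P i ≠ 0) →
        (∀ i < N, ∀ j < N, i ≠ j →
          LinearIndependent ℝ
            ![intVecToE (P (i + 1) - P i), intVecToE (P (j + 1) - P j)]) →
        (∀ i < N, ∀ j < N, i ≠ j →
          InnerProductGeometry.angle
            (intVecToE (P (i + 1) - P i)) (intVecToE (P (j + 1) - P j)) ≤ θ) →
        (∑ i ∈ Finset.range N, ‖intVecToE (P (i + 1) - P i)‖) ≤ R →
        (N : ℝ) + 1 ≤ C * (R ^ ((2 : ℝ) / 3) * θ ^ ((1 : ℝ) / 3) + 1) := by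
  refine ⟨2, by norm_num, ?_⟩
  intro N θ R P hN hθ0 hθπ hR hnz hli hang hsum
  set d : ℕ → Fin 2 → ℤ := fun i => P (i + 1) - P i with hd
  set z : ℕ → ℂ := fun i => c2 (d i) with hzdef
  set n : ℕ → ℝ := fun i => ‖z i‖ with hndef
  set t : ℕ → ℝ := fun i => (Complex.orientation.oangle (z 0) (z i)).toReal with htdef
  have hN0 : 0 < N := hN
  have hz : ∀ i < N, z i ≠ 0 := fun i hi => c2_ne_zero (hnz i hi)
  have hn0 : ∀ i, 0 ≤ n i := fun i => norm_nonneg _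
  -- |t i| ≤ θ
  have ht : ∀ i < N, |t i| ≤ θ := by
    intro i hi
    rcases eq_or_ne i 0 with rfl | hne
    · have ht0 : t 0 = 0 := by
        show (Complex.orientation.oangle (z 0) (z 0)).toReal = 0
        rw [Orientation.oangle_self, Real.Angle.toReal_zero]
      rw [ht0]
      simpa using hθ0
    · have hangle := hang 0 hN0 i hi (Ne.symm hne)
      rw [angle_transfer] at hangle
      have hangle' : InnerProductGeometry.angle (z 0) (z i) ≤ θ := hangle
      rwa [Complex.orientation.angle_eq_abs_oangle_toReal (hz 0 hN0) (hz i hi)] at hangle'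
  -- the pairwise inequality
  have hpair : ∀ i < N, ∀ j < N, i ≠ j → 1 ≤ n i * n j * |t j - t i| := by
    intro i hi j hj hij
    have hp : (1:ℝ) ≤ n i * n j * |Real.sin (Complex.arg ((starRingEnd ℂ) (z i) * z j))| :=
      pair_ineq (hnz i hi) (hli i hi j hj hij)
    have hangle_eq : (Complex.arg ((starRingEnd ℂ) (z i) * z j) : Real.Angle)
        = ((t j - t i : ℝ) : Real.Angle) := by
      calc (Complex.arg ((starRingEnd ℂ) (z i) * z j) : Real.Angle)
          = Complex.orientation.oangle (z i) (z j) := (Complex.oangle _ _).symm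
        _ = Complex.orientation.oangle (z i) (z 0)
            + Complex.orientation.oangle (z 0) (z j) :=
            (Complex.orientation.oangle_add (hz i hi) (hz 0 hN0) (hz j hj)).symm
        _ = -(Complex.orientation.oangle (z 0) (z i))
            + Complex.orientation.oangle (z 0) (z j) := by
            rw [Complex.orientation.oangle_rev (z 0) (z i)]
        _ = ((t j - t i : ℝ) : Real.Angle) := by
            rw [← Real.Angle.coe_toReal (Complex.orientation.oangle (z 0) (z i)),
              ← Real.Angle.coe_toReal (Complex.orientation.oangle (z 0) (z j))]
            rw [Real.Angle.coe_sub]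
            abel
    have hsin : Real.sin (Complex.arg ((starRingEnd ℂ) (z i) * z j))
        = Real.sin (t j - t i) := by
      have := congrArg Real.Angle.sin hangle_eq
      rwa [Real.Angle.sin_coe, Real.Angle.sin_coe] at this
    rw [hsin] at hp
    calc (1:ℝ) ≤ n i * n j * |Real.sin (t j - t i)| := hp
      _ ≤ n i * n j * |t j - t i| := by
          refine mul_le_mul_of_nonneg_left Real.abs_sin_le_abs ?_
          exact mul_nonneg (hn0 i) (hn0 j)
  -- the sum bound
  have hsum' : ∑ i ∈ Finset.range N, n i ≤ R := by
    calc ∑ i ∈ Finset.range N, n i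
        = ∑ i ∈ Finset.range N, ‖intVecToE (d i)‖ :=
          Finset.sum_congr rfl (fun i _ => (norm_intVecToE (d i)).symm)
      _ ≤ R := hsum
  have hmain := sorted_key hN hθ0 hR n t hn0 ht hpair hsum'
  -- conclude with `rpow` arithmetic
  set X : ℝ := R ^ ((2:ℝ)/3) * θ ^ ((1:ℝ)/3) with hXdef
  have hX0 : 0 ≤ X :=
    mul_nonneg (Real.rpow_nonneg hR.le _) (Real.rpow_nonneg hθ0 _)
  have hcube3 : (2 * X)^(3:ℕ) = 8 * (R^2 * θ) := by
    rw [hXdef, mul_pow, mul_pow, ← Real.rpow_natCast (R ^ ((2:ℝ)/3)) 3,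
      ← Real.rpow_natCast (θ ^ ((1:ℝ)/3)) 3, ← Real.rpow_mul hR.le, ← Real.rpow_mul hθ0]
    norm_num
  have hfin : ((N - 1 : ℕ) : ℝ) ≤ 2 * X := by
    refine le_of_pow_le_pow_left₀ (n := 3) (by norm_num) (by linarith) ?_
    rw [hcube3]
    nlinarith [hmain, mul_nonneg hθ0 (sq_nonneg R)]
  have hcast : ((N - 1 : ℕ) : ℝ) = (N : ℝ) - 1 := by
    rw [Nat.cast_sub hN]; norm_num
  rw [hcast] at hfin
  linarith
end

section
/- The set N_∞ of irrational numbers β ∈ (0, 1) such that q_{j+1}(β) ≥ exp(j·q_j(β)) for infinitely many indices j — where q_j(β) denotes the denominator of the j-th convergent of the continued fraction expansion of β — is a dense G_δ subset of the interval (0, 1). -/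
/-- The Gauss-map orbit of `β`: `cfX β 0 = β` and `cfX β (n+1) = frac (1 / cfX β n)`. -/
noncomputable def cfX (β : ℝ) : ℕ → ℝ
  | 0 => β
  | n + 1 => Int.fract (cfX β n)⁻¹

/-- `cfA β n` is the `(n+1)`-st partial quotient `a_{n+1}` of the continued fraction
expansion `β = [0; a₁, a₂, …]` of `β ∈ (0, 1)`. -/
noncomputable def cfA (β : ℝ) (n : ℕ) : ℤ := ⌊(cfX β n)⁻¹⌋

/-- `cfQ β j` is the denominator `q_j` of the `j`-th convergent of the continued
fraction expansion of `β`, given by `q₀ = 1`, `q₁ = a₁`,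
`q_{j+1} = a_{j+1}·q_j + q_{j−1}`. -/
noncomputable def cfQ (β : ℝ) : ℕ → ℤ
  | 0 => 1
  | 1 => cfA β 0
  | n + 2 => cfA β (n + 1) * cfQ β (n + 1) + cfQ β n

/-!
On the irrationals the first partial quotients, hence every `q_j`, are locally constant, so the
condition at `j` cuts out a relatively open set and `N_∞` is `(0, 1) ∩ {irrationals} ∩ ⋂_N ⋃_{j ≥ N}`
of open sets: a G_δ. Each union `⋃_{j ≥ N}` is dense in `(0, 1)`: keep the first `2m` partial
quotients of an irrational `x` and continue with a tiny irrational tail `t`; two steps of the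
expansion contract by `4`, so the result is `4⁻ᵐ`-close to `x`, while its partial quotient
`⌊1/t⌋` exceeds `exp (2m · q_{2m})`. Baire's theorem then gives density of the intersection.
-/

open Filter Topology Set

def cfJumpSet (j : ℕ) : Set ℝ :=
  {β | Real.exp ((j : ℝ) * (cfQ β j : ℝ)) ≤ (cfQ β (j + 1) : ℝ)}

lemma cfX_succ' (x : ℝ) : ∀ n, cfX x (n + 1) = cfX (Int.fract x⁻¹) n
  | 0 => rfl
  | n + 1 => by rw [cfX, cfX_succ' x n, ← cfX]

lemma cfA_succ' (x : ℝ) (n : ℕ) : cfA x (n + 1) = cfA (Int.fract x⁻¹) n := by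
  rw [cfA, cfX_succ', cfA]

lemma Irrational.cfX {x : ℝ} (hx : Irrational x) : ∀ n, Irrational (cfX x n)
  | 0 => hx
  | n + 1 => by
    rw [_root_.cfX, Int.fract]
    exact (hx.cfX n).inv.sub_intCast _

lemma cfX_mem_Ioo {x : ℝ} (hx : Irrational x) (h : x ∈ Ioo (0 : ℝ) 1) (n : ℕ) :
    cfX x n ∈ Ioo (0 : ℝ) 1 := by
  cases n with
  | zero => exact h
  | succ n =>
    exact ⟨(Int.fract_nonneg _).lt_of_ne (hx.cfX (n + 1)).ne_zero.symm, Int.fract_lt_one _⟩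

lemma one_le_cfA {x : ℝ} (hx : Irrational x) (h : x ∈ Ioo (0 : ℝ) 1) (n : ℕ) :
    1 ≤ cfA x n := by
  have hn := cfX_mem_Ioo hx h n
  exact Int.le_floor.2 (by simpa using ((one_lt_inv₀ hn.1).2 hn.2).le)

lemma one_le_cfQ {β : ℝ} (ha : ∀ i, 1 ≤ cfA β i) : ∀ n, 1 ≤ cfQ β n
  | 0 => le_rfl
  | 1 => ha 0
  | n + 2 => by
    have := one_le_cfQ ha n
    have := one_le_cfQ ha (n + 1)
    have := ha (n + 1)
    show 1 ≤ cfA β (n + 1) * cfQ β (n + 1) + cfQ β n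
    nlinarith

lemma cfQ_congr {x y : ℝ} : ∀ n, (∀ i < n, cfA y i = cfA x i) → cfQ y n = cfQ x n
  | 0, _ => rfl
  | 1, h => by rw [cfQ, cfQ, h 0 (by omega)]
  | n + 2, h => by
    rw [cfQ, cfQ, h (n + 1) (by omega), cfQ_congr (n + 1) (fun i hi => h i (by omega)),
      cfQ_congr n (fun i hi => h i (by omega))]

lemma mem_cfJumpSet_of_le_inv_cfX {β : ℝ} (ha : ∀ i, 1 ≤ cfA β i) {j : ℕ} (hj : j ≠ 0)
    (h : Real.exp ((j : ℝ) * (cfQ β j : ℝ)) + 1 ≤ (cfX β j)⁻¹) : β ∈ cfJumpSet j := by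
  obtain ⟨n, rfl⟩ : ∃ n, j = n + 1 := ⟨j - 1, by omega⟩
  have hA : Real.exp (((n + 1 : ℕ) : ℝ) * (cfQ β (n + 1) : ℝ)) ≤ (cfA β (n + 1) : ℝ) := by
    have := Int.sub_one_lt_floor (cfX β (n + 1))⁻¹
    rw [cfA]
    linarith
  have hQ : (1 : ℝ) ≤ cfQ β (n + 1) := by exact_mod_cast one_le_cfQ ha (n + 1)
  have hQ' : (1 : ℝ) ≤ cfQ β n := by exact_mod_cast one_le_cfQ ha n
  have hAQ : (cfA β (n + 1) : ℝ) ≤ cfA β (n + 1) * cfQ β (n + 1) :=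
    le_mul_of_one_le_right (by linarith [Real.exp_pos (((n + 1 : ℕ) : ℝ) * cfQ β (n + 1))]) hQ
  show _ ≤ ((cfA β (n + 1) * cfQ β (n + 1) + cfQ β n : ℤ) : ℝ)
  rw [Int.cast_add, Int.cast_mul]
  linarith

lemma eventually_floor_eq {f : ℝ → ℝ} {x : ℝ} (hf : ContinuousAt f x)
    (h : Irrational (f x)) : ∀ᶠ y in 𝓝 x, ⌊f y⌋ = ⌊f x⌋ := by
  have hlt : (⌊f x⌋ : ℝ) < f x := (Int.floor_le _).lt_of_ne (fun hc => h ⟨⌊f x⌋, hc⟩)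
  filter_upwards [hf.eventually_mem (Ioo_mem_nhds hlt (Int.lt_floor_add_one _))] with y hy
  exact Int.floor_eq_iff.2 ⟨hy.1.le, hy.2⟩

lemma continuousAt_cfX {x : ℝ} (hx : Irrational x) : ∀ n, ContinuousAt (cfX · n) x
  | 0 => continuousAt_id
  | n + 1 =>
    (continuousAt_fract fun hc => (hx.cfX n).inv ⟨_, hc.symm⟩).comp (f := fun y => (cfX y n)⁻¹)
      ((continuousAt_cfX hx n).inv₀ (hx.cfX n).ne_zero)

lemma eventually_cfA_eq {x : ℝ} (hx : Irrational x) (n : ℕ) :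
    ∀ᶠ y in 𝓝 x, cfA y n = cfA x n :=
  eventually_floor_eq ((continuousAt_cfX hx n).inv₀ (hx.cfX n).ne_zero) (hx.cfX n).inv

lemma eventually_cfQ_eq {x : ℝ} (hx : Irrational x) (n : ℕ) :
    ∀ᶠ y in 𝓝 x, cfQ y n = cfQ x n := by
  filter_upwards [(eventually_all_finite (finite_lt_nat n)).2 fun i _ => eventually_cfA_eq hx i]
    with y hy using cfQ_congr n hy

lemma mem_interior_cfJumpSet {x : ℝ} (hx : Irrational x) {j : ℕ} (h : x ∈ cfJumpSet j) :
    x ∈ interior (cfJumpSet j) := by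
  rw [mem_interior_iff_mem_nhds]
  filter_upwards [eventually_cfQ_eq hx j, eventually_cfQ_eq hx (j + 1)] with y hj hj'
  simpa only [cfJumpSet, mem_ofPred_eq, hj, hj'] using h

section WithTail

/-- `cfWithTail a m t = [0; a 0, …, a (m - 1) + t]`. -/
noncomputable def cfWithTail : (ℕ → ℤ) → ℕ → ℝ → ℝ
  | _, 0, t => t
  | a, m + 1, t => ((a 0 : ℝ) + cfWithTail (fun i => a (i + 1)) m t)⁻¹

variable {a : ℕ → ℤ} {t : ℝ}

lemma cfWithTail_mem_Ioo (ha : ∀ i, 1 ≤ a i) (ht : t ∈ Ioo (0 : ℝ) 1) (m : ℕ) :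
    cfWithTail a m t ∈ Ioo (0 : ℝ) 1 := by
  induction m generalizing a with
  | zero => exact ht
  | succ m ih =>
    have h0 : (1 : ℝ) ≤ a 0 := by exact_mod_cast ha 0
    have hz := ih (a := fun i => a (i + 1)) fun i => ha (i + 1)
    exact ⟨inv_pos.2 (by linarith [hz.1]), inv_lt_one_of_one_lt₀ (by linarith [hz.1])⟩

lemma Irrational.cfWithTail (ht : Irrational t) (m : ℕ) : Irrational (cfWithTail a m t) := by
  induction m generalizing a with
  | zero => exact ht
  | succ m ih => exact (ih.intCast_add (a 0)).inv

lemma cfA_inv_intCast_add_zero (k : ℤ) {z : ℝ} (hz : z ∈ Ico (0 : ℝ) 1) :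
    cfA ((k + z)⁻¹) 0 = k := by
  rw [cfA, cfX, inv_inv, Int.floor_intCast_add, Int.floor_eq_zero_iff.2 hz, add_zero]

lemma cfX_inv_intCast_add_succ (k : ℤ) {z : ℝ} (hz : z ∈ Ico (0 : ℝ) 1) (n : ℕ) :
    cfX ((k + z)⁻¹) (n + 1) = cfX z n := by
  rw [cfX_succ', inv_inv, Int.fract_intCast_add, Int.fract_eq_self.2 hz]

lemma cfA_cfWithTail (ha : ∀ i, 1 ≤ a i) (ht : t ∈ Ioo (0 : ℝ) 1) {m i : ℕ} (hi : i < m) :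
    cfA (cfWithTail a m t) i = a i := by
  induction m generalizing a i with
  | zero => omega
  | succ m ih =>
    have hz := Ioo_subset_Ico_self
      (cfWithTail_mem_Ioo (a := fun i => a (i + 1)) (fun i => ha (i + 1)) ht m)
    cases i with
    | zero => exact cfA_inv_intCast_add_zero _ hz
    | succ i =>
      rw [cfWithTail, cfA, cfX_inv_intCast_add_succ _ hz, ← cfA]
      exact ih (fun i => ha (i + 1)) (by omega)

lemma cfX_cfWithTail (ha : ∀ i, 1 ≤ a i) (ht : t ∈ Ioo (0 : ℝ) 1) (m : ℕ) :
    cfX (cfWithTail a m t) m = t := by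
  induction m generalizing a with
  | zero => rfl
  | succ m ih =>
    have hz := Ioo_subset_Ico_self
      (cfWithTail_mem_Ioo (a := fun i => a (i + 1)) (fun i => ha (i + 1)) ht m)
    rw [cfWithTail, cfX_inv_intCast_add_succ _ hz]
    exact ih fun i => ha (i + 1)

lemma cfWithTail_cfA_cfX (x : ℝ) (m : ℕ) : cfWithTail (cfA x) m (cfX x m) = x := by
  induction m generalizing x with
  | zero => rfl
  | succ m ih =>
    have hA : (fun i => cfA x (i + 1)) = cfA (Int.fract x⁻¹) := funext (cfA_succ' x)
    rw [cfWithTail, hA, cfX_succ', ih, cfA, cfX, Int.floor_add_fract, inv_inv]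

lemma abs_inv_add_inv_add_sub_le {A B u u' : ℝ} (hA : 1 ≤ A) (hB : 1 ≤ B)
    (hu : 0 ≤ u) (hu' : 0 ≤ u') :
    |(A + (B + u)⁻¹)⁻¹ - (A + (B + u')⁻¹)⁻¹| ≤ |u - u'| / 4 := by
  have hP : 2 ≤ A * (B + u) + 1 := by nlinarith
  have hP' : 2 ≤ A * (B + u') + 1 := by nlinarith
  have hD : 0 < B + u := by linarith
  have hD' : 0 < B + u' := by linarith
  have heq : (A + (B + u)⁻¹)⁻¹ - (A + (B + u')⁻¹)⁻¹ =
      (u - u') / ((A * (B + u) + 1) * (A * (B + u') + 1)) := by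
    field_simp
    ring
  rw [heq, abs_div, abs_of_pos (mul_pos (by linarith) (by linarith) :
    (0 : ℝ) < (A * (B + u) + 1) * (A * (B + u') + 1))]
  exact div_le_div_of_nonneg_left (abs_nonneg _) (by norm_num) (by nlinarith)

lemma abs_cfWithTail_sub_le (ha : ∀ i, 1 ≤ a i) {t' : ℝ} (ht : t ∈ Ioo (0 : ℝ) 1)
    (ht' : t' ∈ Ioo (0 : ℝ) 1) (m : ℕ) :
    |cfWithTail a (2 * m) t - cfWithTail a (2 * m) t'| ≤ (1 / 4) ^ m * |t - t'| := by
  induction m generalizing a with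
  | zero => simp [cfWithTail]
  | succ m ih =>
    have ha₂ : ∀ i, 1 ≤ a (i + 2) := fun i => ha (i + 2)
    have h0 : (1 : ℝ) ≤ a 0 := by exact_mod_cast ha 0
    have h1 : (1 : ℝ) ≤ a 1 := by exact_mod_cast ha 1
    calc |cfWithTail a (2 * (m + 1)) t - cfWithTail a (2 * (m + 1)) t'|
        ≤ |cfWithTail (fun i => a (i + 2)) (2 * m) t
            - cfWithTail (fun i => a (i + 2)) (2 * m) t'| / 4 :=
          abs_inv_add_inv_add_sub_le h0 h1 (cfWithTail_mem_Ioo ha₂ ht _).1.le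
            (cfWithTail_mem_Ioo ha₂ ht' _).1.le
      _ ≤ (1 / 4) ^ m * |t - t'| / 4 := by gcongr; exact ih ha₂
      _ = (1 / 4) ^ (m + 1) * |t - t'| := by ring

end WithTail

lemma exists_near_mem_cfJumpSet {x : ℝ} (hx : Irrational x) (hmem : x ∈ Ioo (0 : ℝ) 1)
    {ε : ℝ} (hε : 0 < ε) (N : ℕ) :
    ∃ β, Irrational β ∧ |β - x| < ε ∧ ∃ j ≥ N, β ∈ cfJumpSet j := by
  obtain ⟨m, hmε, hmN⟩ := (((tendsto_pow_atTop_nhds_zero_of_lt_one (by norm_num)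
    (by norm_num : (1 / 4 : ℝ) < 1)).eventually (gt_mem_nhds hε)).and
      (eventually_ge_atTop (N + 1))).exists
  have ha : ∀ i, 1 ≤ cfA x i := one_le_cfA hx hmem
  set E := Real.exp (((2 * m : ℕ) : ℝ) * (cfQ x (2 * m) : ℝ))
  have hE : 1 < E + 1 := lt_add_of_pos_left 1 (Real.exp_pos _)
  obtain ⟨t, htirr, ht0, htE⟩ := exists_irrational_btwn (inv_pos.2 (zero_lt_one.trans hE))
  have ht : t ∈ Ioo (0 : ℝ) 1 := ⟨ht0, htE.trans (inv_lt_one_of_one_lt₀ hE)⟩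
  set β := cfWithTail (cfA x) (2 * m) t
  have hβ : β ∈ Ioo (0 : ℝ) 1 := cfWithTail_mem_Ioo ha ht _
  refine ⟨β, htirr.cfWithTail _, ?_, 2 * m, by omega, ?_⟩
  · have hx' := cfX_mem_Ioo hx hmem (2 * m)
    calc |β - x| = |β - cfWithTail (cfA x) (2 * m) (cfX x (2 * m))| := by
          rw [cfWithTail_cfA_cfX]
      _ ≤ (1 / 4) ^ m * |t - cfX x (2 * m)| := abs_cfWithTail_sub_le ha ht hx' m
      _ ≤ (1 / 4) ^ m * 1 := by
          gcongr
          exact (abs_sub_lt_iff.2 ⟨by linarith [ht.2, hx'.1], by linarith [ht.1, hx'.2]⟩).le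
      _ < ε := by rwa [mul_one]
  · refine mem_cfJumpSet_of_le_inv_cfX (one_le_cfA (htirr.cfWithTail _) hβ) (by omega) ?_
    rw [cfX_cfWithTail ha ht, cfQ_congr _ fun i hi => cfA_cfWithTail ha ht hi]
    exact (le_inv_comm₀ (zero_lt_one.trans hE) ht0).2 htE.le

lemma Ioo_subset_closure_iUnion_interior_cfJumpSet (N : ℕ) :
    Ioo (0 : ℝ) 1 ⊆ closure (⋃ j ≥ N, interior (cfJumpSet j)) := by
  refine (dense_irrational.open_subset_closure_inter isOpen_Ioo).trans
    (closure_minimal ?_ isClosed_closure)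
  rintro x ⟨hmem, hx⟩
  refine Metric.mem_closure_iff.2 fun ε hε => ?_
  obtain ⟨β, hβ, hβx, j, hj, hβj⟩ := exists_near_mem_cfJumpSet hx hmem hε N
  exact ⟨β, mem_biUnion hj (mem_interior_cfJumpSet hβ hβj), by rwa [dist_comm, Real.dist_eq]⟩

lemma setOf_infinite_eq_iInter_iUnion {α : Type*} (U : ℕ → Set α) :
    {x | {j | x ∈ U j}.Infinite} = ⋂ N, ⋃ j ≥ N, U j := by
  ext x
  simp [← Nat.frequently_atTop_iff_infinite, frequently_atTop]

lemma dense_union_compl_closure {X : Type*} [TopologicalSpace X] {s U : Set X}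
    (h : s ⊆ closure U) : Dense (U ∪ (closure s)ᶜ) := by
  refine fun x => (em (x ∈ closure s)).elim (fun hx => ?_) fun hx => subset_closure (Or.inr hx)
  exact closure_mono subset_union_left (closure_minimal h isClosed_closure hx)

def cfNInfty : Set ℝ := {β | β ∈ Ioo (0 : ℝ) 1 ∧ Irrational β ∧ {j | β ∈ cfJumpSet j}.Infinite}

lemma cfNInfty_eq : cfNInfty =
    Ioo (0 : ℝ) 1 ∩ ({β | Irrational β} ∩ ⋂ N, ⋃ j ≥ N, interior (cfJumpSet j)) := by
  rw [← setOf_infinite_eq_iInter_iUnion]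
  ext β
  simp only [cfNInfty, mem_inter_iff, mem_ofPred_eq]
  refine and_congr_right fun _ => and_congr_right fun hβ => ?_
  have hint : ∀ j, β ∈ interior (cfJumpSet j) ↔ β ∈ cfJumpSet j :=
    fun j => ⟨fun h => interior_subset h, mem_interior_cfJumpSet hβ⟩
  simp only [hint]

lemma isGδ_cfNInfty : IsGδ cfNInfty := by
  rw [cfNInfty_eq]
  exact isOpen_Ioo.isGδ.inter (IsGδ.setOfPred_irrational.inter
    (.iInter_of_isOpen fun _ => isOpen_biUnion fun _ _ => isOpen_interior))

lemma Ioo_subset_closure_cfNInfty : Ioo (0 : ℝ) 1 ⊆ closure cfNInfty := by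
  have hres : ∀ᶠ x in residual ℝ, Irrational x ∧
      ∀ N, x ∈ (⋃ j ≥ N, interior (cfJumpSet j)) ∪ (closure (Ioo (0 : ℝ) 1))ᶜ :=
    eventually_residual_irrational.and <| eventually_countable_forall.2 fun N =>
      residual_of_dense_open
        ((isOpen_biUnion fun _ _ => isOpen_interior).union isClosed_closure.isOpen_compl)
        (dense_union_compl_closure (Ioo_subset_closure_iUnion_interior_cfJumpSet N))
  refine ((dense_of_mem_residual hres).open_subset_closure_inter isOpen_Ioo).trans
    (closure_mono ?_)
  rintro x ⟨hx, hirr, hU⟩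
  rw [cfNInfty_eq]
  exact ⟨hx, hirr, mem_iInter.2 fun N => (hU N).resolve_right (not_not.2 (subset_closure hx))⟩

/-- The set of irrationals `β ∈ (0,1)` with `q_{j+1}(β) ≥ exp(j·q_j(β))` for
infinitely many `j` is a dense G_δ subset of `(0,1)`. -/
theorem Ninfty_dense_Gdelta :
    IsGδ {β : ℝ | β ∈ Set.Ioo (0 : ℝ) 1 ∧ Irrational β ∧
        {j : ℕ | Real.exp ((j : ℝ) * (cfQ β j : ℝ)) ≤ (cfQ β (j + 1) : ℝ)}.Infinite} ∧
    Set.Ioo (0 : ℝ) 1 ⊆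
      closure {β : ℝ | β ∈ Set.Ioo (0 : ℝ) 1 ∧ Irrational β ∧
        {j : ℕ | Real.exp ((j : ℝ) * (cfQ β j : ℝ)) ≤ (cfQ β (j + 1) : ℝ)}.Infinite} :=
  ⟨isGδ_cfNInfty, Ioo_subset_closure_cfNInfty⟩
end
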